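/- arXiv:2303.08489 — 4 statements merged into one kernel-verified Lean document; each statement's English description precedes it below -/
import Mathlib

section
/- Let a₀, …, a₁₅ be integers and suppose b₀ + b₂ ≢ b₁ + b₃ (mod 2). Then D₄(b₀, b₁, b₂, b₃) · D₄(c₀, c₁, c₂, c₃) ≡ 1 − 8(d₀d₂ + d₄d₆ + d₁d₃ + d₅d₇) (mod 16). -/
/-- The group determinant `D₄(x₀,x₁,x₂,x₃) = det (x_{(i-j) mod 4})_{0 ≤ i,j ≤ 3}` of `C₄`. -/
def D4 (x0 x1 x2 x3 : ℤ) : ℤ :=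
  Matrix.det (Matrix.of fun i j : Fin 4 => ![x0, x1, x2, x3] (i - j))

theorem D4_eq (x0 x1 x2 x3 : ℤ) : D4 x0 x1 x2 x3 =
    (x0+x1+x2+x3)*(x0-x1+x2-x3)*((x0-x2)^2+(x1-x3)^2) := by
  have hm : (Matrix.of fun i j : Fin 4 => ![x0, x1, x2, x3] (i - j)) =
      !![x0,x3,x2,x1; x1,x0,x3,x2; x2,x1,x0,x3; x3,x2,x1,x0] := by
    ext i j; fin_cases i <;> fin_cases j <;> rfl
  show Matrix.det _ = _
  rw [hm, Matrix.det_succ_row_zero]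
  simp [Fin.sum_univ_succ, Matrix.det_fin_three,
    show ((1:Fin 4).succAbove 2) = 3 from rfl, show ((2:Fin 4).succAbove 2) = 3 from rfl,
    show (Fin.castSucc 2 : Fin 4) = 2 from rfl,
    show ((3:Fin 4).succAbove 2) = 2 from rfl]
  ring

set_option maxHeartbeats 2000000 in
theorem case_0001 (P Q R T n0 n1 n2 n3 : ℤ) :
    (((2*P)^2+(2*Q)^2-(2*R)^2-(2*T+1)^2)^2-4*((2*P)*(2*Q)-(2*R)*(2*T+1))^2)*(((2*P+2*n0)^2+(2*Q+2*n1)^2+(2*R+2*n2)^2+(2*T+1+2*n3)^2)^2-4*((2*P+2*n0)*(2*R+2*n2)+(2*Q+2*n1)*(2*T+1+2*n3))^2) ≡ 1-2*((2*P)^2+(2*Q)^2+(2*R)^2+(2*T+1)^2)+2*((2*P+2*n0)^2+(2*Q+2*n1)^2+(2*R+2*n2)^2+(2*T+1+2*n3)^2) [ZMOD 16] := by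
  have h1 : (((2*P)^2+(2*Q)^2-(2*R)^2-(2*T+1)^2)^2-4*((2*P)*(2*Q)-(2*R)*(2*T+1))^2) ≡ ((1 + (8*T + 8*T^2)) + (8*R^2 + (8*Q^2 + 8*P^2))) [ZMOD 16] := by
    rw [Int.modEq_iff_dvd]; exact ⟨((((-1*T^2 + -2*T^3) + (-1*T^4 + (R^2 + 2*R^2*T))) + ((2*R^2*T^2 + -1*R^4) + (Q^2 + (2*Q^2*T + 2*Q^2*T^2)))) + (((2*Q^2*R^2 + -1*Q^4) + (-4*P*Q*R + (-8*P*Q*R*T + P^2))) + ((2*P^2*T + 2*P^2*T^2) + (2*P^2*R^2 + (2*P^2*Q^2 + -1*P^4))))), by ring⟩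
  have h2 : (((2*P+2*n0)^2+(2*Q+2*n1)^2+(2*R+2*n2)^2+(2*T+1+2*n3)^2)^2-4*((2*P+2*n0)*(2*R+2*n2)+(2*Q+2*n1)*(2*T+1+2*n3))^2) ≡ (((1 + 8*n3) + (8*n3^2 + (8*n2^2 + 8*n1^2))) + ((8*n0^2 + (8*T + 8*T^2)) + (8*R^2 + (8*Q^2 + 8*P^2)))) [ZMOD 16] := by
    rw [Int.modEq_iff_dvd]; exact ⟨(((((((-1*n3^2 + -2*n3^3) + (-1*n3^4 + -2*n2^2*n3)) + ((-2*n2^2*n3^2 + -1*n2^4) + (n1^2 + 2*n1^2*n3))) + (((2*n1^2*n3^2 + -2*n1^2*n2^2) + (-1*n1^4 + 4*n0*n1*n2)) + ((8*n0*n1*n2*n3 + -2*n0^2*n3) + (-2*n0^2*n3^2 + 2*n0^2*n2^2)))) + ((((-2*n0^2*n1^2 + -1*n0^4) + (-3*T*n3 + -6*T*n3^2)) + ((-4*T*n3^3 + -2*T*n2^2) + (-4*T*n2^2*n3 + 2*T*n1^2))) + (((4*T*n1^2*n3 + 8*T*n0*n1*n2) + (-2*T*n0^2 + -4*T*n0^2*n3))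 + ((-1*T^2 + -6*T^2*n3) + (-6*T^2*n3^2 + -2*T^2*n2^2))))) + (((((2*T^2*n1^2 + -2*T^2*n0^2) + (-2*T^3 + -4*T^3*n3)) + ((-1*T^4 + -1*R*n2) + (-4*R*n2*n3 + -4*R*n2*n3^2))) + (((-4*R*n2^3 + -4*R*n1^2*n2) + (4*R*n0*n1 + 8*R*n0*n1*n3)) + ((4*R*n0^2*n2 + -4*R*T*n2) + (-8*R*T*n2*n3 + 8*R*T*n0*n1)))) + ((((-4*R*T^2*n2 + -2*R^2*n3) + (-2*R^2*n3^2 + -6*R^2*n2^2)) + ((-2*R^2*n1^2 + 2*R^2*n0^2) + (-2*R^2*T + -4*R^2*T*n3))) + (((-2*R^2*T^2 + -4*R^3*n2) + (-1*R^4 + Q*n1)) + ((4*Q*n1*n3 + 4*Q*n1*n3^2) + (-4*Q*n1*n2^2 + -4*Q*n1^3)))))) + ((((((4*Q*n0*n2 + 8*Q*n0*n2*n3) + (-4*Q*n0^2*n1 + 4*Q*T*n1)) + ((8*Q*T*n1*n3 + 8*Q*T*n0*n2) + (4*Q*T^2*n1 + -8*Q*R*n1*n2))) + (((4*Q*R*n0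 + 8*Q*R*n0*n3) + (8*Q*R*T*n0 + -4*Q*R^2*n1)) + ((Q^2 + 2*Q^2*n3) + (2*Q^2*n3^2 + -2*Q^2*n2^2)))) + ((((-6*Q^2*n1^2 + -2*Q^2*n0^2) + (2*Q^2*T + 4*Q^2*T*n3)) + ((2*Q^2*T^2 + -4*Q^2*R*n2) + (-2*Q^2*R^2 + -4*Q^3*n1))) + (((-1*Q^4 + 4*P*n1*n2) + (8*P*n1*n2*n3 + -1*P*n0)) + ((-4*P*n0*n3 + -4*P*n0*n3^2) + (4*P*n0*n2^2 + -4*P*n0*n1^2))))) + (((((-4*P*n0^3 + 8*P*T*n1*n2) + (-4*P*T*n0 + -8*P*T*n0*n3)) + ((-4*P*T^2*n0 + 4*P*R*n1) + (8*P*R*n1*n3 + 8*P*R*n0*n2))) + (((8*P*R*T*n1 + 4*P*R^2*n0) + (4*P*Q*n2 + 8*P*Q*n2*n3)) + ((-8*P*Q*n0*n1 + 8*P*Q*T*n2) + (4*P*Q*R + 8*P*Q*R*n3)))) + ((((8*P*Q*R*T + -4*P*Q^2*n0) + (-2*P^2*n3 + -2*P^2*n3^2)) + ((2*P^2*n2^2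 + -2*P^2*n1^2) + (-6*P^2*n0^2 + -2*P^2*T))) + (((-4*P^2*T*n3 + -2*P^2*T^2) + (4*P^2*R*n2 + 2*P^2*R^2)) + ((-4*P^2*Q*n1 + -2*P^2*Q^2) + (-4*P^3*n0 + -1*P^4))))))), by ring⟩
  have h3 : (((1 + (8*T + 8*T^2)) + (8*R^2 + (8*Q^2 + 8*P^2)))) * ((((1 + 8*n3) + (8*n3^2 + (8*n2^2 + 8*n1^2))) + ((8*n0^2 + (8*T + 8*T^2)) + (8*R^2 + (8*Q^2 + 8*P^2))))) ≡ 1-2*((2*P)^2+(2*Q)^2+(2*R)^2+(2*T+1)^2)+2*((2*P+2*n0)^2+(2*Q+2*n1)^2+(2*R+2*n2)^2+(2*T+1+2*n3)^2) [ZMOD 16] := by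
    rw [Int.modEq_iff_dvd]; exact ⟨(((((-1*T + -3*T*n3) + (-4*T*n3^2 + (-4*T*n2^2 + -4*T*n1^2))) + ((-4*T*n0^2 + (-5*T^2 + -4*T^2*n3)) + (-4*T^2*n3^2 + (-4*T^2*n2^2 + -4*T^2*n1^2)))) + (((-4*T^2*n0^2 + (-8*T^3 + -4*T^4)) + (R*n2 + (-1*R^2 + -4*R^2*n3))) + ((-4*R^2*n3^2 + (-4*R^2*n2^2 + -4*R^2*n1^2)) + (-4*R^2*n0^2 + (-8*R^2*T + -8*R^2*T^2))))) + ((((-4*R^4 + (Q*n1 + -1*Q^2)) + (-4*Q^2*n3 + (-4*Q^2*n3^2 + -4*Q^2*n2^2))) + ((-4*Q^2*n1^2 + (-4*Q^2*n0^2 + -8*Q^2*T)) + (-8*Q^2*T^2 + (-8*Q^2*R^2 + -4*Q^4)))) + (((P*n0 + (-1*P^2 + -4*P^2*n3)) + (-4*P^2*n3^2 + (-4*P^2*n2^2 + -4*P^2*n1^2))) + ((-4*P^2*n0^2 + (-8*P^2*T + -8*P^2*T^2)) + (-8*P^2*R^2 + (-8*P^2*Q^2 + -4*P^4)))))), by 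ring⟩
  exact (h1.mul h2).trans h3

set_option maxHeartbeats 2000000 in
theorem case_0010 (P Q R T n0 n1 n2 n3 : ℤ) :
    (((2*P)^2+(2*Q)^2-(2*R+1)^2-(2*T)^2)^2-4*((2*P)*(2*Q)-(2*R+1)*(2*T))^2)*(((2*P+2*n0)^2+(2*Q+2*n1)^2+(2*R+1+2*n2)^2+(2*T+2*n3)^2)^2-4*((2*P+2*n0)*(2*R+1+2*n2)+(2*Q+2*n1)*(2*T+2*n3))^2) ≡ 1-2*((2*P)^2+(2*Q)^2+(2*R+1)^2+(2*T)^2)+2*((2*P+2*n0)^2+(2*Q+2*n1)^2+(2*R+1+2*n2)^2+(2*T+2*n3)^2) [ZMOD 16] := by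
  have h1 : (((2*P)^2+(2*Q)^2-(2*R+1)^2-(2*T)^2)^2-4*((2*P)*(2*Q)-(2*R+1)*(2*T))^2) ≡ ((1 + (8*T^2 + 8*R)) + (8*R^2 + (8*Q^2 + 8*P^2))) [ZMOD 16] := by
    rw [Int.modEq_iff_dvd]; exact ⟨((((T^2 + -1*T^4) + (2*R*T^2 + (-1*R^2 + 2*R^2*T^2))) + ((-2*R^3 + -1*R^4) + (Q^2 + (2*Q^2*T^2 + 2*Q^2*R)))) + (((2*Q^2*R^2 + -1*Q^4) + (-4*P*Q*T + (-8*P*Q*R*T + P^2))) + ((2*P^2*T^2 + 2*P^2*R) + (2*P^2*R^2 + (2*P^2*Q^2 + -1*P^4))))), by ring⟩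
  have h2 : (((2*P+2*n0)^2+(2*Q+2*n1)^2+(2*R+1+2*n2)^2+(2*T+2*n3)^2)^2-4*((2*P+2*n0)*(2*R+1+2*n2)+(2*Q+2*n1)*(2*T+2*n3))^2) ≡ (((1 + 8*n3^2) + (8*n2 + (8*n2^2 + 8*n1^2))) + ((8*n0^2 + (8*T^2 + 8*R)) + (8*R^2 + (8*Q^2 + 8*P^2)))) [ZMOD 16] := by
    rw [Int.modEq_iff_dvd]; exact ⟨(((((((-1*n3^4 + -2*n2*n3^2) + (-1*n2^2 + -2*n2^2*n3^2)) + ((-2*n2^3 + -1*n2^4) + (2*n1^2*n3^2 + -2*n1^2*n2))) + (((-2*n1^2*n2^2 + -1*n1^4) + (4*n0*n1*n3 + 8*n0*n1*n2*n3)) + ((n0^2 + -2*n0^2*n3^2) + (2*n0^2*n2 + 2*n0^2*n2^2)))) + ((((-2*n0^2*n1^2 + -1*n0^4) + (-1*T*n3 + -4*T*n3^3)) + ((-4*T*n2*n3 + -4*T*n2^2*n3) + (4*T*n1^2*n3 + 4*T*n0*n1))) + (((8*T*n0*n1*n2 + -4*T*n0^2*n3) + (-6*T^2*n3^2 + -2*T^2*n2))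 + ((-2*T^2*n2^2 + 2*T^2*n1^2) + (-2*T^2*n0^2 + -4*T^3*n3))))) + (((((-1*T^4 + -2*R*n3^2) + (-3*R*n2 + -4*R*n2*n3^2)) + ((-6*R*n2^2 + -4*R*n2^3) + (-2*R*n1^2 + -4*R*n1^2*n2))) + (((8*R*n0*n1*n3 + 2*R*n0^2) + (4*R*n0^2*n2 + -4*R*T*n3)) + ((-8*R*T*n2*n3 + 8*R*T*n0*n1) + (-2*R*T^2 + -4*R*T^2*n2)))) + ((((-1*R^2 + -2*R^2*n3^2) + (-6*R^2*n2 + -6*R^2*n2^2)) + ((-2*R^2*n1^2 + 2*R^2*n0^2) + (-4*R^2*T*n3 + -2*R^2*T^2))) + (((-2*R^3 + -4*R^3*n2) + (-1*R^4 + -1*Q*n1)) + ((4*Q*n1*n3^2 + -4*Q*n1*n2) + (-4*Q*n1*n2^2 + -4*Q*n1^3)))))) + ((((((4*Q*n0*n3 + 8*Q*n0*n2*n3) + (-4*Q*n0^2*n1 + 8*Q*T*n1*n3)) + ((4*Q*T*n0 + 8*Q*T*n0*n2) + (4*Q*T^2*n1 + -4*Q*R*n1))) + (((-8*Q*R*n1*n2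 + 8*Q*R*n0*n3) + (8*Q*R*T*n0 + -4*Q*R^2*n1)) + ((2*Q^2*n3^2 + -2*Q^2*n2) + (-2*Q^2*n2^2 + -6*Q^2*n1^2)))) + ((((-2*Q^2*n0^2 + 4*Q^2*T*n3) + (2*Q^2*T^2 + -2*Q^2*R)) + ((-4*Q^2*R*n2 + -2*Q^2*R^2) + (-4*Q^3*n1 + -1*Q^4))) + (((4*P*n1*n3 + 8*P*n1*n2*n3) + (P*n0 + -4*P*n0*n3^2)) + ((4*P*n0*n2 + 4*P*n0*n2^2) + (-4*P*n0*n1^2 + -4*P*n0^3))))) + (((((4*P*T*n1 + 8*P*T*n1*n2) + (-8*P*T*n0*n3 + -4*P*T^2*n0)) + ((8*P*R*n1*n3 + 4*P*R*n0) + (8*P*R*n0*n2 + 8*P*R*T*n1))) + (((4*P*R^2*n0 + 4*P*Q*n3) + (8*P*Q*n2*n3 + -8*P*Q*n0*n1)) + ((4*P*Q*T + 8*P*Q*T*n2) + (8*P*Q*R*n3 + 8*P*Q*R*T)))) + ((((-4*P*Q^2*n0 + P^2) + (-2*P^2*n3^2 + 2*P^2*n2)) + ((2*P^2*n2^2 +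 -2*P^2*n1^2) + (-6*P^2*n0^2 + -4*P^2*T*n3))) + (((-2*P^2*T^2 + 2*P^2*R) + (4*P^2*R*n2 + 2*P^2*R^2)) + ((-4*P^2*Q*n1 + -2*P^2*Q^2) + (-4*P^3*n0 + -1*P^4))))))), by ring⟩
  have h3 : (((1 + (8*T^2 + 8*R)) + (8*R^2 + (8*Q^2 + 8*P^2)))) * ((((1 + 8*n3^2) + (8*n2 + (8*n2^2 + 8*n1^2))) + ((8*n0^2 + (8*T^2 + 8*R)) + (8*R^2 + (8*Q^2 + 8*P^2))))) ≡ 1-2*((2*P)^2+(2*Q)^2+(2*R+1)^2+(2*T)^2)+2*((2*P+2*n0)^2+(2*Q+2*n1)^2+(2*R+1+2*n2)^2+(2*T+2*n3)^2) [ZMOD 16] := by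
    rw [Int.modEq_iff_dvd]; exact ⟨(((((T*n3 + -1*T^2) + (-4*T^2*n3^2 + (-4*T^2*n2 + -4*T^2*n2^2))) + ((-4*T^2*n1^2 + (-4*T^2*n0^2 + -4*T^4)) + (-1*R + (-4*R*n3^2 + -3*R*n2)))) + (((-4*R*n2^2 + (-4*R*n1^2 + -4*R*n0^2)) + (-8*R*T^2 + (-5*R^2 + -4*R^2*n3^2))) + ((-4*R^2*n2 + (-4*R^2*n2^2 + -4*R^2*n1^2)) + (-4*R^2*n0^2 + (-8*R^2*T^2 + -8*R^3))))) + ((((-4*R^4 + (Q*n1 + -1*Q^2)) + (-4*Q^2*n3^2 + (-4*Q^2*n2 + -4*Q^2*n2^2))) + ((-4*Q^2*n1^2 + (-4*Q^2*n0^2 + -8*Q^2*T^2)) + (-8*Q^2*R + (-8*Q^2*R^2 + -4*Q^4)))) + (((P*n0 + (-1*P^2 + -4*P^2*n3^2)) + (-4*P^2*n2 + (-4*P^2*n2^2 + -4*P^2*n1^2))) + ((-4*P^2*n0^2 + (-8*P^2*T^2 + -8*P^2*R)) + (-8*P^2*R^2 + (-8*P^2*Q^2 + -4*P^4)))))), by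 ring⟩
  exact (h1.mul h2).trans h3

set_option maxHeartbeats 2000000 in
theorem case_0100 (P Q R T n0 n1 n2 n3 : ℤ) :
    (((2*P)^2+(2*Q+1)^2-(2*R)^2-(2*T)^2)^2-4*((2*P)*(2*Q+1)-(2*R)*(2*T))^2)*(((2*P+2*n0)^2+(2*Q+1+2*n1)^2+(2*R+2*n2)^2+(2*T+2*n3)^2)^2-4*((2*P+2*n0)*(2*R+2*n2)+(2*Q+1+2*n1)*(2*T+2*n3))^2) ≡ 1-2*((2*P)^2+(2*Q+1)^2+(2*R)^2+(2*T)^2)+2*((2*P+2*n0)^2+(2*Q+1+2*n1)^2+(2*R+2*n2)^2+(2*T+2*n3)^2) [ZMOD 16] := by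
  have h1 : (((2*P)^2+(2*Q+1)^2-(2*R)^2-(2*T)^2)^2-4*((2*P)*(2*Q+1)-(2*R)*(2*T))^2) ≡ ((1 + (8*T^2 + 8*R^2)) + (8*Q + (8*Q^2 + 8*P^2))) [ZMOD 16] := by
    rw [Int.modEq_iff_dvd]; exact ⟨((((T^2 + -1*T^4) + (R^2 + (2*R^2*T^2 + -1*R^4))) + ((2*Q*T^2 + 2*Q*R^2) + (-1*Q^2 + (2*Q^2*T^2 + 2*Q^2*R^2)))) + (((-2*Q^3 + -1*Q^4) + (-4*P*R*T + (-8*P*Q*R*T + P^2))) + ((2*P^2*T^2 + 2*P^2*R^2) + (2*P^2*Q + (2*P^2*Q^2 + -1*P^4))))), by ring⟩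
  have h2 : (((2*P+2*n0)^2+(2*Q+1+2*n1)^2+(2*R+2*n2)^2+(2*T+2*n3)^2)^2-4*((2*P+2*n0)*(2*R+2*n2)+(2*Q+1+2*n1)*(2*T+2*n3))^2) ≡ (((1 + 8*n3^2) + (8*n2^2 + (8*n1 + 8*n1^2))) + ((8*n0^2 + (8*T^2 + 8*R^2)) + (8*Q + (8*Q^2 + 8*P^2)))) [ZMOD 16] := by
    rw [Int.modEq_iff_dvd]; exact ⟨(((((((n3^2 + -1*n3^4) + (-2*n2^2*n3^2 + -1*n2^4)) + ((2*n1*n3^2 + -2*n1*n2^2) + (-1*n1^2 + 2*n1^2*n3^2))) + (((-2*n1^2*n2^2 + -2*n1^3) + (-1*n1^4 + 4*n0*n2*n3)) + ((8*n0*n1*n2*n3 + -2*n0^2*n3^2) + (2*n0^2*n2^2 + -2*n0^2*n1)))) + ((((-2*n0^2*n1^2 + -1*n0^4) + (T*n3 + -4*T*n3^3)) + ((-4*T*n2^2*n3 + 4*T*n1*n3) + (4*T*n1^2*n3 + 4*T*n0*n2))) + (((8*T*n0*n1*n2 + -4*T*n0^2*n3) + (T^2 + -6*T^2*n3^2)) +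 ((-2*T^2*n2^2 + 2*T^2*n1) + (2*T^2*n1^2 + -2*T^2*n0^2))))) + (((((-4*T^3*n3 + -1*T^4) + (-1*R*n2 + -4*R*n2*n3^2)) + ((-4*R*n2^3 + -4*R*n1*n2) + (-4*R*n1^2*n2 + 4*R*n0*n3))) + (((8*R*n0*n1*n3 + 4*R*n0^2*n2) + (-8*R*T*n2*n3 + 4*R*T*n0)) + ((8*R*T*n0*n1 + -4*R*T^2*n2) + (-2*R^2*n3^2 + -6*R^2*n2^2)))) + ((((-2*R^2*n1 + -2*R^2*n1^2) + (2*R^2*n0^2 + -4*R^2*T*n3)) + ((-2*R^2*T^2 + -4*R^3*n2) + (-1*R^4 + 2*Q*n3^2))) + (((-2*Q*n2^2 + -3*Q*n1) + (4*Q*n1*n3^2 + -4*Q*n1*n2^2)) + ((-6*Q*n1^2 + -4*Q*n1^3) + (8*Q*n0*n2*n3 + -2*Q*n0^2)))))) + ((((((-4*Q*n0^2*n1 + 4*Q*T*n3) + (8*Q*T*n1*n3 + 8*Q*T*n0*n2)) + ((2*Q*T^2 + 4*Q*T^2*n1) + (-4*Q*R*n2 + -8*Q*R*n1*n2))) + (((8*Q*R*n0*n3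 + 8*Q*R*T*n0) + (-2*Q*R^2 + -4*Q*R^2*n1)) + ((-1*Q^2 + 2*Q^2*n3^2) + (-2*Q^2*n2^2 + -6*Q^2*n1)))) + ((((-6*Q^2*n1^2 + -2*Q^2*n0^2) + (4*Q^2*T*n3 + 2*Q^2*T^2)) + ((-4*Q^2*R*n2 + -2*Q^2*R^2) + (-2*Q^3 + -4*Q^3*n1))) + (((-1*Q^4 + 4*P*n2*n3) + (8*P*n1*n2*n3 + -1*P*n0)) + ((-4*P*n0*n3^2 + 4*P*n0*n2^2) + (-4*P*n0*n1 + -4*P*n0*n1^2))))) + (((((-4*P*n0^3 + 4*P*T*n2) + (8*P*T*n1*n2 + -8*P*T*n0*n3)) + ((-4*P*T^2*n0 + 4*P*R*n3) + (8*P*R*n1*n3 + 8*P*R*n0*n2))) + (((4*P*R*T + 8*P*R*T*n1) + (4*P*R^2*n0 + 8*P*Q*n2*n3)) + ((-4*P*Q*n0 + -8*P*Q*n0*n1) + (8*P*Q*T*n2 + 8*P*Q*R*n3)))) + ((((8*P*Q*R*T + -4*P*Q^2*n0) + (-2*P^2*n3^2 + 2*P^2*n2^2)) + ((-2*P^2*n1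 + -2*P^2*n1^2) + (-6*P^2*n0^2 + -4*P^2*T*n3))) + (((-2*P^2*T^2 + 4*P^2*R*n2) + (2*P^2*R^2 + -2*P^2*Q)) + ((-4*P^2*Q*n1 + -2*P^2*Q^2) + (-4*P^3*n0 + -1*P^4))))))), by ring⟩
  have h3 : (((1 + (8*T^2 + 8*R^2)) + (8*Q + (8*Q^2 + 8*P^2)))) * ((((1 + 8*n3^2) + (8*n2^2 + (8*n1 + 8*n1^2))) + ((8*n0^2 + (8*T^2 + 8*R^2)) + (8*Q + (8*Q^2 + 8*P^2))))) ≡ 1-2*((2*P)^2+(2*Q+1)^2+(2*R)^2+(2*T)^2)+2*((2*P+2*n0)^2+(2*Q+1+2*n1)^2+(2*R+2*n2)^2+(2*T+2*n3)^2) [ZMOD 16] := by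
    rw [Int.modEq_iff_dvd]; exact ⟨(((((T*n3 + -1*T^2) + (-4*T^2*n3^2 + (-4*T^2*n2^2 + -4*T^2*n1))) + ((-4*T^2*n1^2 + (-4*T^2*n0^2 + -4*T^4)) + (R*n2 + (-1*R^2 + -4*R^2*n3^2)))) + (((-4*R^2*n2^2 + (-4*R^2*n1 + -4*R^2*n1^2)) + (-4*R^2*n0^2 + (-8*R^2*T^2 + -4*R^4))) + ((-1*Q + (-4*Q*n3^2 + -4*Q*n2^2)) + (-3*Q*n1 + (-4*Q*n1^2 + -4*Q*n0^2))))) + ((((-8*Q*T^2 + (-8*Q*R^2 + -5*Q^2)) + (-4*Q^2*n3^2 + (-4*Q^2*n2^2 + -4*Q^2*n1))) + ((-4*Q^2*n1^2 + (-4*Q^2*n0^2 + -8*Q^2*T^2)) + (-8*Q^2*R^2 + (-8*Q^3 + -4*Q^4)))) + (((P*n0 + (-1*P^2 + -4*P^2*n3^2)) + (-4*P^2*n2^2 + (-4*P^2*n1 + -4*P^2*n1^2))) + ((-4*P^2*n0^2 + (-8*P^2*T^2 + -8*P^2*R^2)) + (-8*P^2*Q + (-8*P^2*Q^2 + -4*P^4)))))),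 by ring⟩
  exact (h1.mul h2).trans h3

set_option maxHeartbeats 2000000 in
theorem case_0111 (P Q R T n0 n1 n2 n3 : ℤ) :
    (((2*P)^2+(2*Q+1)^2-(2*R+1)^2-(2*T+1)^2)^2-4*((2*P)*(2*Q+1)-(2*R+1)*(2*T+1))^2)*(((2*P+2*n0)^2+(2*Q+1+2*n1)^2+(2*R+1+2*n2)^2+(2*T+1+2*n3)^2)^2-4*((2*P+2*n0)*(2*R+1+2*n2)+(2*Q+1+2*n1)*(2*T+1+2*n3))^2) ≡ 1-2*((2*P)^2+(2*Q+1)^2+(2*R+1)^2+(2*T+1)^2)+2*((2*P+2*n0)^2+(2*Q+1+2*n1)^2+(2*R+1+2*n2)^2+(2*T+1+2*n3)^2) [ZMOD 16] := by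
  have h1 : (((2*P)^2+(2*Q+1)^2-(2*R+1)^2-(2*T+1)^2)^2-4*((2*P)*(2*Q+1)-(2*R+1)*(2*T+1))^2) ≡ (((-3 + 8*T) + (8*T^2 + 8*R)) + ((8*R^2 + 8*Q) + (8*Q^2 + 8*P^2))) [ZMOD 16] := by
    rw [Int.modEq_iff_dvd]; exact ⟨(((((T + -2*T^3) + (-1*T^4 + R)) + ((2*R*T + 2*R*T^2) + (2*R^2*T + (2*R^2*T^2 + -2*R^3)))) + (((-1*R^4 + Q) + (2*Q*T + 2*Q*T^2)) + ((2*Q*R + 2*Q*R^2) + (2*Q^2*T + (2*Q^2*T^2 + 2*Q^2*R))))) + ((((2*Q^2*R^2 + -2*Q^3) + (-1*Q^4 + -1*P)) + ((-2*P*T + -2*P*R) + (-4*P*R*T + (-2*P*Q + -4*P*Q*T)))) + (((-4*P*Q*R + -8*P*Q*R*T) + (2*P^2 + (2*P^2*T + 2*P^2*T^2))) + ((2*P^2*R + 2*P^2*R^2) + (2*P^2*Q + (2*P^2*Q^2 + -1*P^4)))))), by ring⟩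
  have h2 : (((2*P+2*n0)^2+(2*Q+1+2*n1)^2+(2*R+1+2*n2)^2+(2*T+1+2*n3)^2)^2-4*((2*P+2*n0)*(2*R+1+2*n2)+(2*Q+1+2*n1)*(2*T+1+2*n3))^2) ≡ (((5 + (8*n3 + 8*n3^2)) + ((8*n2 + 8*n2^2) + (8*n1 + 8*n1^2))) + (((8*n0^2 + 8*T) + (8*T^2 + 8*R)) + ((8*R^2 + 8*Q) + (8*Q^2 + 8*P^2)))) [ZMOD 16] := by
    rw [Int.modEq_iff_dvd]; exact ⟨(((((((-1*n3^2 + (-2*n3^3 + -1*n3^4)) + (-1*n2 + (-2*n2*n3 + -2*n2*n3^2))) + ((-2*n2^2 + (-2*n2^2*n3 + -2*n2^2*n3^2)) + ((-2*n2^3 + -1*n2^4) + (2*n1*n3 + 2*n1*n3^2)))) + (((-2*n1*n2 + (-2*n1*n2^2 + -1*n1^2)) + ((2*n1^2*n3 + 2*n1^2*n3^2) + (-2*n1^2*n2 + -2*n1^2*n2^2))) + ((-2*n1^3 + (-1*n1^4 + n0)) + ((2*n0*n3 + 2*n0*n2) + (4*n0*n2*n3 + 2*n0*n1))))) + ((((4*n0*n1*n3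 + (4*n0*n1*n2 + 8*n0*n1*n2*n3)) + (-2*n0^2*n3 + (-2*n0^2*n3^2 + 2*n0^2*n2))) + ((2*n0^2*n2^2 + (-2*n0^2*n1 + -2*n0^2*n1^2)) + ((-1*n0^4 + -3*T*n3) + (-6*T*n3^2 + -4*T*n3^3)))) + (((-2*T*n2 + (-4*T*n2*n3 + -2*T*n2^2)) + ((-4*T*n2^2*n3 + 2*T*n1) + (4*T*n1*n3 + 2*T*n1^2))) + ((4*T*n1^2*n3 + (2*T*n0 + 4*T*n0*n2)) + ((4*T*n0*n1 + 8*T*n0*n1*n2) + (-2*T*n0^2 + -4*T*n0^2*n3)))))) + (((((-1*T^2 + (-6*T^2*n3 + -6*T^2*n3^2)) + (-2*T^2*n2 + (-2*T^2*n2^2 + 2*T^2*n1))) + ((2*T^2*n1^2 + (-2*T^2*n0^2 + -2*T^3)) + ((-4*T^3*n3 + -1*T^4) + (-1*R + -2*R*n3)))) + (((-2*R*n3^2 + (-5*R*n2 + -4*R*n2*n3)) + ((-4*R*n2*n3^2 + -6*R*n2^2) + (-4*R*n2^3 + -2*R*n1))) + ((-4*R*n1*n2 + (-2*R*n1^2 +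 -4*R*n1^2*n2)) + ((2*R*n0 + 4*R*n0*n3) + (4*R*n0*n1 + 8*R*n0*n1*n3))))) + ((((2*R*n0^2 + (4*R*n0^2*n2 + -2*R*T)) + ((-4*R*T*n3 + -4*R*T*n2) + (-8*R*T*n2*n3 + 4*R*T*n0))) + ((8*R*T*n0*n1 + (-2*R*T^2 + -4*R*T^2*n2)) + ((-2*R^2 + -2*R^2*n3) + (-2*R^2*n3^2 + -6*R^2*n2)))) + (((-6*R^2*n2^2 + (-2*R^2*n1 + -2*R^2*n1^2)) + ((2*R^2*n0^2 + -2*R^2*T) + (-4*R^2*T*n3 + -2*R^2*T^2))) + ((-2*R^3 + (-4*R^3*n2 + -1*R^4)) + ((2*Q*n3 + 2*Q*n3^2) + (-2*Q*n2 + -2*Q*n2^2))))))) + ((((((-3*Q*n1 + (4*Q*n1*n3 + 4*Q*n1*n3^2)) + (-4*Q*n1*n2 + (-4*Q*n1*n2^2 + -6*Q*n1^2))) + ((-4*Q*n1^3 + (2*Q*n0 + 4*Q*n0*n3)) + ((4*Q*n0*n2 + 8*Q*n0*n2*n3) + (-2*Q*n0^2 + -4*Q*n0^2*n1)))) + (((2*Q*T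 + (4*Q*T*n3 + 4*Q*T*n1)) + ((8*Q*T*n1*n3 + 4*Q*T*n0) + (8*Q*T*n0*n2 + 2*Q*T^2))) + ((4*Q*T^2*n1 + (-2*Q*R + -4*Q*R*n2)) + ((-4*Q*R*n1 + -8*Q*R*n1*n2) + (4*Q*R*n0 + 8*Q*R*n0*n3))))) + ((((8*Q*R*T*n0 + (-2*Q*R^2 + -4*Q*R^2*n1)) + (-1*Q^2 + (2*Q^2*n3 + 2*Q^2*n3^2))) + ((-2*Q^2*n2 + (-2*Q^2*n2^2 + -6*Q^2*n1)) + ((-6*Q^2*n1^2 + -2*Q^2*n0^2) + (2*Q^2*T + 4*Q^2*T*n3)))) + (((2*Q^2*T^2 + (-2*Q^2*R + -4*Q^2*R*n2)) + ((-2*Q^2*R^2 + -2*Q^3) + (-4*Q^3*n1 + -1*Q^4))) + ((P + (2*P*n3 + 2*P*n2)) + ((4*P*n2*n3 + 2*P*n1) + (4*P*n1*n3 + 4*P*n1*n2)))))) + (((((8*P*n1*n2*n3 + (-1*P*n0 + -4*P*n0*n3)) + (-4*P*n0*n3^2 + (4*P*n0*n2 + 4*P*n0*n2^2))) + ((-4*P*n0*n1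 + (-4*P*n0*n1^2 + -4*P*n0^3)) + ((2*P*T + 4*P*T*n2) + (4*P*T*n1 + 8*P*T*n1*n2)))) + (((-4*P*T*n0 + (-8*P*T*n0*n3 + -4*P*T^2*n0)) + ((2*P*R + 4*P*R*n3) + (4*P*R*n1 + 8*P*R*n1*n3))) + ((4*P*R*n0 + (8*P*R*n0*n2 + 4*P*R*T)) + ((8*P*R*T*n1 + 4*P*R^2*n0) + (2*P*Q + 4*P*Q*n3))))) + ((((4*P*Q*n2 + (8*P*Q*n2*n3 + -4*P*Q*n0)) + ((-8*P*Q*n0*n1 + 4*P*Q*T) + (8*P*Q*T*n2 + 4*P*Q*R))) + ((8*P*Q*R*n3 + (8*P*Q*R*T + -4*P*Q^2*n0)) + ((-2*P^2*n3 + -2*P^2*n3^2) + (2*P^2*n2 + 2*P^2*n2^2)))) + (((-2*P^2*n1 + (-2*P^2*n1^2 + -6*P^2*n0^2)) + ((-2*P^2*T + -4*P^2*T*n3) + (-2*P^2*T^2 + 2*P^2*R))) + ((4*P^2*R*n2 + (2*P^2*R^2 + -2*P^2*Q)) + ((-4*P^2*Q*n1 + -2*P^2*Q^2) + (-4*P^3*n0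 + -1*P^4)))))))), by ring⟩
  have h3 : ((((-3 + 8*T) + (8*T^2 + 8*R)) + ((8*R^2 + 8*Q) + (8*Q^2 + 8*P^2)))) * ((((5 + (8*n3 + 8*n3^2)) + ((8*n2 + 8*n2^2) + (8*n1 + 8*n1^2))) + (((8*n0^2 + 8*T) + (8*T^2 + 8*R)) + ((8*R^2 + 8*Q) + (8*Q^2 + 8*P^2))))) ≡ 1-2*((2*P)^2+(2*Q+1)^2+(2*R+1)^2+(2*T+1)^2)+2*((2*P+2*n0)^2+(2*Q+1+2*n1)^2+(2*R+1+2*n2)^2+(2*T+1+2*n3)^2) [ZMOD 16] := by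
    rw [Int.modEq_iff_dvd]; exact ⟨((((((1 + 2*n3) + (2*n3^2 + (2*n2 + 2*n2^2))) + ((2*n1 + (2*n1^2 + 2*n0^2)) + (-1*T + (-3*T*n3 + -4*T*n3^2)))) + (((-4*T*n2 + -4*T*n2^2) + (-4*T*n1 + (-4*T*n1^2 + -4*T*n0^2))) + ((-5*T^2 + (-4*T^2*n3 + -4*T^2*n3^2)) + (-4*T^2*n2 + (-4*T^2*n2^2 + -4*T^2*n1))))) + ((((-4*T^2*n1^2 + -4*T^2*n0^2) + (-8*T^3 + (-4*T^4 + -1*R))) + ((-4*R*n3 + (-4*R*n3^2 + -3*R*n2)) + (-4*R*n2^2 + (-4*R*n1 + -4*R*n1^2)))) + (((-4*R*n0^2 + (-8*R*T + -8*R*T^2)) + (-5*R^2 + (-4*R^2*n3 + -4*R^2*n3^2))) + ((-4*R^2*n2 + (-4*R^2*n2^2 + -4*R^2*n1)) + (-4*R^2*n1^2 + (-4*R^2*n0^2 + -8*R^2*T)))))) + (((((-8*R^2*T^2 + -8*R^3) + (-4*R^4 + (-1*Q + -4*Q*n3))) + ((-4*Q*n3^2 + (-4*Q*n2 + -4*Q*n2^2))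 + (-3*Q*n1 + (-4*Q*n1^2 + -4*Q*n0^2)))) + (((-8*Q*T + -8*Q*T^2) + (-8*Q*R + (-8*Q*R^2 + -5*Q^2))) + ((-4*Q^2*n3 + (-4*Q^2*n3^2 + -4*Q^2*n2)) + (-4*Q^2*n2^2 + (-4*Q^2*n1 + -4*Q^2*n1^2))))) + ((((-4*Q^2*n0^2 + -8*Q^2*T) + (-8*Q^2*T^2 + (-8*Q^2*R + -8*Q^2*R^2))) + ((-8*Q^3 + (-4*Q^4 + P*n0)) + (-1*P^2 + (-4*P^2*n3 + -4*P^2*n3^2)))) + (((-4*P^2*n2 + (-4*P^2*n2^2 + -4*P^2*n1)) + (-4*P^2*n1^2 + (-4*P^2*n0^2 + -8*P^2*T))) + ((-8*P^2*T^2 + (-8*P^2*R + -8*P^2*R^2)) + (-8*P^2*Q + (-8*P^2*Q^2 + -4*P^4))))))), by ring⟩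
  exact (h1.mul h2).trans h3

set_option maxHeartbeats 2000000 in
theorem case_1000 (P Q R T n0 n1 n2 n3 : ℤ) :
    (((2*P+1)^2+(2*Q)^2-(2*R)^2-(2*T)^2)^2-4*((2*P+1)*(2*Q)-(2*R)*(2*T))^2)*(((2*P+1+2*n0)^2+(2*Q+2*n1)^2+(2*R+2*n2)^2+(2*T+2*n3)^2)^2-4*((2*P+1+2*n0)*(2*R+2*n2)+(2*Q+2*n1)*(2*T+2*n3))^2) ≡ 1-2*((2*P+1)^2+(2*Q)^2+(2*R)^2+(2*T)^2)+2*((2*P+1+2*n0)^2+(2*Q+2*n1)^2+(2*R+2*n2)^2+(2*T+2*n3)^2) [ZMOD 16] := by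
  have h1 : (((2*P+1)^2+(2*Q)^2-(2*R)^2-(2*T)^2)^2-4*((2*P+1)*(2*Q)-(2*R)*(2*T))^2) ≡ ((1 + (8*T^2 + 8*R^2)) + (8*Q^2 + (8*P + 8*P^2))) [ZMOD 16] := by
    rw [Int.modEq_iff_dvd]; exact ⟨((((T^2 + -1*T^4) + (R^2 + (2*R^2*T^2 + -1*R^4))) + ((-4*Q*R*T + Q^2) + (2*Q^2*T^2 + (2*Q^2*R^2 + -1*Q^4)))) + (((2*P*T^2 + 2*P*R^2) + (-8*P*Q*R*T + (2*P*Q^2 + -1*P^2))) + ((2*P^2*T^2 + 2*P^2*R^2) + (2*P^2*Q^2 + (-2*P^3 + -1*P^4))))), by ring⟩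
  have h2 : (((2*P+1+2*n0)^2+(2*Q+2*n1)^2+(2*R+2*n2)^2+(2*T+2*n3)^2)^2-4*((2*P+1+2*n0)*(2*R+2*n2)+(2*Q+2*n1)*(2*T+2*n3))^2) ≡ (((1 + 8*n3^2) + (8*n2^2 + (8*n1^2 + 8*n0))) + ((8*n0^2 + (8*T^2 + 8*R^2)) + (8*Q^2 + (8*P + 8*P^2)))) [ZMOD 16] := by
    rw [Int.modEq_iff_dvd]; exact ⟨(((((((-1*n3^4 + n2^2) + (-2*n2^2*n3^2 + -1*n2^4)) + ((4*n1*n2*n3 + 2*n1^2*n3^2) + (-2*n1^2*n2^2 + -1*n1^4))) + (((-2*n0*n3^2 + 2*n0*n2^2) + (8*n0*n1*n2*n3 + -2*n0*n1^2)) + ((-1*n0^2 + -2*n0^2*n3^2) + (2*n0^2*n2^2 + -2*n0^2*n1^2)))) + ((((-2*n0^3 + -1*n0^4) + (-1*T*n3 + -4*T*n3^3)) + ((-4*T*n2^2*n3 + 4*T*n1*n2) + (4*T*n1^2*n3 + -4*T*n0*n3))) + (((8*T*n0*n1*n2 + -4*T*n0^2*n3) + (-6*T^2*n3^2 + -2*T^2*n2^2))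 + ((2*T^2*n1^2 + -2*T^2*n0) + (-2*T^2*n0^2 + -4*T^3*n3))))) + (((((-1*T^4 + R*n2) + (-4*R*n2*n3^2 + -4*R*n2^3)) + ((4*R*n1*n3 + -4*R*n1^2*n2) + (4*R*n0*n2 + 8*R*n0*n1*n3))) + (((4*R*n0^2*n2 + -8*R*T*n2*n3) + (4*R*T*n1 + 8*R*T*n0*n1)) + ((-4*R*T^2*n2 + R^2) + (-2*R^2*n3^2 + -6*R^2*n2^2)))) + ((((-2*R^2*n1^2 + 2*R^2*n0) + (2*R^2*n0^2 + -4*R^2*T*n3)) + ((-2*R^2*T^2 + -4*R^3*n2) + (-1*R^4 + 4*Q*n2*n3))) + (((-1*Q*n1 + 4*Q*n1*n3^2) + (-4*Q*n1*n2^2 + -4*Q*n1^3)) + ((8*Q*n0*n2*n3 + -4*Q*n0*n1) + (-4*Q*n0^2*n1 + 4*Q*T*n2)))))) + ((((((8*Q*T*n1*n3 + 8*Q*T*n0*n2) + (4*Q*T^2*n1 + 4*Q*R*n3)) + ((-8*Q*R*n1*n2 + 8*Q*R*n0*n3) + (4*Q*R*T + 8*Q*R*T*n0))) + (((-4*Q*R^2*n1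 + 2*Q^2*n3^2) + (-2*Q^2*n2^2 + -6*Q^2*n1^2)) + ((-2*Q^2*n0 + -2*Q^2*n0^2) + (4*Q^2*T*n3 + 2*Q^2*T^2)))) + ((((-4*Q^2*R*n2 + -2*Q^2*R^2) + (-4*Q^3*n1 + -1*Q^4)) + ((-2*P*n3^2 + 2*P*n2^2) + (8*P*n1*n2*n3 + -2*P*n1^2))) + (((-3*P*n0 + -4*P*n0*n3^2) + (4*P*n0*n2^2 + -4*P*n0*n1^2)) + ((-6*P*n0^2 + -4*P*n0^3) + (-4*P*T*n3 + 8*P*T*n1*n2))))) + (((((-8*P*T*n0*n3 + -2*P*T^2) + (-4*P*T^2*n0 + 4*P*R*n2)) + ((8*P*R*n1*n3 + 8*P*R*n0*n2) + (8*P*R*T*n1 + 2*P*R^2))) + (((4*P*R^2*n0 + 8*P*Q*n2*n3) + (-4*P*Q*n1 + -8*P*Q*n0*n1)) + ((8*P*Q*T*n2 + 8*P*Q*R*n3) + (8*P*Q*R*T + -2*P*Q^2)))) + ((((-4*P*Q^2*n0 + -1*P^2) + (-2*P^2*n3^2 + 2*P^2*n2^2)) + ((-2*P^2*n1^2 + -6*P^2*n0)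 + (-6*P^2*n0^2 + -4*P^2*T*n3))) + (((-2*P^2*T^2 + 4*P^2*R*n2) + (2*P^2*R^2 + -4*P^2*Q*n1)) + ((-2*P^2*Q^2 + -2*P^3) + (-4*P^3*n0 + -1*P^4))))))), by ring⟩
  have h3 : (((1 + (8*T^2 + 8*R^2)) + (8*Q^2 + (8*P + 8*P^2)))) * ((((1 + 8*n3^2) + (8*n2^2 + (8*n1^2 + 8*n0))) + ((8*n0^2 + (8*T^2 + 8*R^2)) + (8*Q^2 + (8*P + 8*P^2))))) ≡ 1-2*((2*P+1)^2+(2*Q)^2+(2*R)^2+(2*T)^2)+2*((2*P+1+2*n0)^2+(2*Q+2*n1)^2+(2*R+2*n2)^2+(2*T+2*n3)^2) [ZMOD 16] := by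
    rw [Int.modEq_iff_dvd]; exact ⟨(((((T*n3 + -1*T^2) + (-4*T^2*n3^2 + (-4*T^2*n2^2 + -4*T^2*n1^2))) + ((-4*T^2*n0 + (-4*T^2*n0^2 + -4*T^4)) + (R*n2 + (-1*R^2 + -4*R^2*n3^2)))) + (((-4*R^2*n2^2 + (-4*R^2*n1^2 + -4*R^2*n0)) + (-4*R^2*n0^2 + (-8*R^2*T^2 + -4*R^4))) + ((Q*n1 + (-1*Q^2 + -4*Q^2*n3^2)) + (-4*Q^2*n2^2 + (-4*Q^2*n1^2 + -4*Q^2*n0))))) + ((((-4*Q^2*n0^2 + (-8*Q^2*T^2 + -8*Q^2*R^2)) + (-4*Q^4 + (-1*P + -4*P*n3^2))) + ((-4*P*n2^2 + (-4*P*n1^2 + -3*P*n0)) + (-4*P*n0^2 + (-8*P*T^2 + -8*P*R^2)))) + (((-8*P*Q^2 + (-5*P^2 + -4*P^2*n3^2)) + (-4*P^2*n2^2 + (-4*P^2*n1^2 + -4*P^2*n0))) + ((-4*P^2*n0^2 + (-8*P^2*T^2 + -8*P^2*R^2)) + (-8*P^2*Q^2 + (-8*P^3 + -4*P^4)))))),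 by ring⟩
  exact (h1.mul h2).trans h3

set_option maxHeartbeats 2000000 in
theorem case_1011 (P Q R T n0 n1 n2 n3 : ℤ) :
    (((2*P+1)^2+(2*Q)^2-(2*R+1)^2-(2*T+1)^2)^2-4*((2*P+1)*(2*Q)-(2*R+1)*(2*T+1))^2)*(((2*P+1+2*n0)^2+(2*Q+2*n1)^2+(2*R+1+2*n2)^2+(2*T+1+2*n3)^2)^2-4*((2*P+1+2*n0)*(2*R+1+2*n2)+(2*Q+2*n1)*(2*T+1+2*n3))^2) ≡ 1-2*((2*P+1)^2+(2*Q)^2+(2*R+1)^2+(2*T+1)^2)+2*((2*P+1+2*n0)^2+(2*Q+2*n1)^2+(2*R+1+2*n2)^2+(2*T+1+2*n3)^2) [ZMOD 16] := by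
  have h1 : (((2*P+1)^2+(2*Q)^2-(2*R+1)^2-(2*T+1)^2)^2-4*((2*P+1)*(2*Q)-(2*R+1)*(2*T+1))^2) ≡ (((-3 + 8*T) + (8*T^2 + 8*R)) + ((8*R^2 + 8*Q^2) + (8*P + 8*P^2))) [ZMOD 16] := by
    rw [Int.modEq_iff_dvd]; exact ⟨(((((T + -2*T^3) + (-1*T^4 + R)) + ((2*R*T + 2*R*T^2) + (2*R^2*T + (2*R^2*T^2 + -2*R^3)))) + (((-1*R^4 + -1*Q) + (-2*Q*T + -2*Q*R)) + ((-4*Q*R*T + 2*Q^2) + (2*Q^2*T + (2*Q^2*T^2 + 2*Q^2*R))))) + ((((2*Q^2*R^2 + -1*Q^4) + (P + 2*P*T)) + ((2*P*T^2 + 2*P*R) + (2*P*R^2 + (-2*P*Q + -4*P*Q*T)))) + (((-4*P*Q*R + -8*P*Q*R*T) + (2*P*Q^2 + (2*P^2*T + 2*P^2*T^2))) + ((2*P^2*R + 2*P^2*R^2) + (2*P^2*Q^2 + (-2*P^3 + -1*P^4)))))), by ring⟩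
  have h2 : (((2*P+1+2*n0)^2+(2*Q+2*n1)^2+(2*R+1+2*n2)^2+(2*T+1+2*n3)^2)^2-4*((2*P+1+2*n0)*(2*R+1+2*n2)+(2*Q+2*n1)*(2*T+1+2*n3))^2) ≡ (((5 + (8*n3 + 8*n3^2)) + ((8*n2 + 8*n2^2) + (8*n1^2 + 8*n0))) + (((8*n0^2 + 8*T) + (8*T^2 + 8*R)) + ((8*R^2 + 8*Q^2) + (8*P + 8*P^2)))) [ZMOD 16] := by
    rw [Int.modEq_iff_dvd]; exact ⟨(((((((-1*n3 + (-2*n3^2 + -2*n3^3)) + (-1*n3^4 + (-2*n2*n3 + -2*n2*n3^2))) + ((-1*n2^2 + (-2*n2^2*n3 + -2*n2^2*n3^2)) + ((-2*n2^3 + -1*n2^4) + (n1 + 2*n1*n3)))) + (((2*n1*n2 + (4*n1*n2*n3 + 2*n1^2*n3)) + ((2*n1^2*n3^2 + -2*n1^2*n2) + (-2*n1^2*n2^2 + -1*n1^4))) + ((-2*n0*n3 + (-2*n0*n3^2 + 2*n0*n2)) + ((2*n0*n2^2 + 2*n0*n1) + (4*n0*n1*n3 + 4*n0*n1*n2)))))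 + ((((8*n0*n1*n2*n3 + (-2*n0*n1^2 + -1*n0^2)) + (-2*n0^2*n3 + (-2*n0^2*n3^2 + 2*n0^2*n2))) + ((2*n0^2*n2^2 + (-2*n0^2*n1^2 + -2*n0^3)) + ((-1*n0^4 + -1*T) + (-5*T*n3 + -6*T*n3^2)))) + (((-4*T*n3^3 + (-2*T*n2 + -4*T*n2*n3)) + ((-2*T*n2^2 + -4*T*n2^2*n3) + (2*T*n1 + 4*T*n1*n2))) + ((2*T*n1^2 + (4*T*n1^2*n3 + -2*T*n0)) + ((-4*T*n0*n3 + 4*T*n0*n1) + (8*T*n0*n1*n2 + -2*T*n0^2)))))) + (((((-4*T*n0^2*n3 + (-2*T^2 + -6*T^2*n3)) + (-6*T^2*n3^2 + (-2*T^2*n2 + -2*T^2*n2^2))) + ((2*T^2*n1^2 + (-2*T^2*n0 + -2*T^2*n0^2)) + ((-2*T^3 + -4*T^3*n3) + (-1*T^4 + -2*R*n3)))) + (((-2*R*n3^2 + (-3*R*n2 + -4*R*n2*n3)) + ((-4*R*n2*n3^2 + -6*R*n2^2) + (-4*R*n2^3 + 2*R*n1))) + ((4*R*n1*n3 + (-2*R*n1^2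 + -4*R*n1^2*n2)) + ((2*R*n0 + 4*R*n0*n2) + (4*R*n0*n1 + 8*R*n0*n1*n3))))) + ((((2*R*n0^2 + (4*R*n0^2*n2 + -2*R*T)) + ((-4*R*T*n3 + -4*R*T*n2) + (-8*R*T*n2*n3 + 4*R*T*n1))) + ((8*R*T*n0*n1 + (-2*R*T^2 + -4*R*T^2*n2)) + ((-1*R^2 + -2*R^2*n3) + (-2*R^2*n3^2 + -6*R^2*n2)))) + (((-6*R^2*n2^2 + (-2*R^2*n1^2 + 2*R^2*n0)) + ((2*R^2*n0^2 + -2*R^2*T) + (-4*R^2*T*n3 + -2*R^2*T^2))) + ((-2*R^3 + (-4*R^3*n2 + -1*R^4)) + ((Q + 2*Q*n3) + (2*Q*n2 + 4*Q*n2*n3))))))) + ((((((-1*Q*n1 + (4*Q*n1*n3 + 4*Q*n1*n3^2)) + (-4*Q*n1*n2 + (-4*Q*n1*n2^2 + -4*Q*n1^3))) + ((2*Q*n0 + (4*Q*n0*n3 + 4*Q*n0*n2)) + ((8*Q*n0*n2*n3 + -4*Q*n0*n1) + (-4*Q*n0^2*n1 + 2*Q*T)))) + (((4*Q*T*n2 +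 (4*Q*T*n1 + 8*Q*T*n1*n3)) + ((4*Q*T*n0 + 8*Q*T*n0*n2) + (4*Q*T^2*n1 + 2*Q*R))) + ((4*Q*R*n3 + (-4*Q*R*n1 + -8*Q*R*n1*n2)) + ((4*Q*R*n0 + 8*Q*R*n0*n3) + (4*Q*R*T + 8*Q*R*T*n0))))) + ((((-4*Q*R^2*n1 + (2*Q^2*n3 + 2*Q^2*n3^2)) + (-2*Q^2*n2 + (-2*Q^2*n2^2 + -6*Q^2*n1^2))) + ((-2*Q^2*n0 + (-2*Q^2*n0^2 + 2*Q^2*T)) + ((4*Q^2*T*n3 + 2*Q^2*T^2) + (-2*Q^2*R + -4*Q^2*R*n2)))) + (((-2*Q^2*R^2 + (-4*Q^3*n1 + -1*Q^4)) + ((-2*P*n3 + -2*P*n3^2) + (2*P*n2 + 2*P*n2^2))) + ((2*P*n1 + (4*P*n1*n3 + 4*P*n1*n2)) + ((8*P*n1*n2*n3 + -2*P*n1^2) + (-3*P*n0 + -4*P*n0*n3)))))) + (((((-4*P*n0*n3^2 + (4*P*n0*n2 + 4*P*n0*n2^2)) + (-4*P*n0*n1^2 + (-6*P*n0^2 + -4*P*n0^3)))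 + ((-2*P*T + (-4*P*T*n3 + 4*P*T*n1)) + ((8*P*T*n1*n2 + -4*P*T*n0) + (-8*P*T*n0*n3 + -2*P*T^2)))) + (((-4*P*T^2*n0 + (2*P*R + 4*P*R*n2)) + ((4*P*R*n1 + 8*P*R*n1*n3) + (4*P*R*n0 + 8*P*R*n0*n2))) + ((8*P*R*T*n1 + (2*P*R^2 + 4*P*R^2*n0)) + ((2*P*Q + 4*P*Q*n3) + (4*P*Q*n2 + 8*P*Q*n2*n3))))) + ((((-4*P*Q*n1 + (-8*P*Q*n0*n1 + 4*P*Q*T)) + ((8*P*Q*T*n2 + 4*P*Q*R) + (8*P*Q*R*n3 + 8*P*Q*R*T))) + ((-2*P*Q^2 + (-4*P*Q^2*n0 + -1*P^2)) + ((-2*P^2*n3 + -2*P^2*n3^2) + (2*P^2*n2 + 2*P^2*n2^2)))) + (((-2*P^2*n1^2 + (-6*P^2*n0 + -6*P^2*n0^2)) + ((-2*P^2*T + -4*P^2*T*n3) + (-2*P^2*T^2 + 2*P^2*R))) + ((4*P^2*R*n2 + (2*P^2*R^2 + -4*P^2*Q*n1)) + ((-2*P^2*Q^2 + -2*P^3)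 + (-4*P^3*n0 + -1*P^4)))))))), by ring⟩
  have h3 : ((((-3 + 8*T) + (8*T^2 + 8*R)) + ((8*R^2 + 8*Q^2) + (8*P + 8*P^2)))) * ((((5 + (8*n3 + 8*n3^2)) + ((8*n2 + 8*n2^2) + (8*n1^2 + 8*n0))) + (((8*n0^2 + 8*T) + (8*T^2 + 8*R)) + ((8*R^2 + 8*Q^2) + (8*P + 8*P^2))))) ≡ 1-2*((2*P+1)^2+(2*Q)^2+(2*R+1)^2+(2*T+1)^2)+2*((2*P+1+2*n0)^2+(2*Q+2*n1)^2+(2*R+1+2*n2)^2+(2*T+1+2*n3)^2) [ZMOD 16] := by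
    rw [Int.modEq_iff_dvd]; exact ⟨((((((1 + 2*n3) + (2*n3^2 + (2*n2 + 2*n2^2))) + ((2*n1^2 + (2*n0 + 2*n0^2)) + (-1*T + (-3*T*n3 + -4*T*n3^2)))) + (((-4*T*n2 + -4*T*n2^2) + (-4*T*n1^2 + (-4*T*n0 + -4*T*n0^2))) + ((-5*T^2 + (-4*T^2*n3 + -4*T^2*n3^2)) + (-4*T^2*n2 + (-4*T^2*n2^2 + -4*T^2*n1^2))))) + ((((-4*T^2*n0 + -4*T^2*n0^2) + (-8*T^3 + (-4*T^4 + -1*R))) + ((-4*R*n3 + (-4*R*n3^2 + -3*R*n2)) + (-4*R*n2^2 + (-4*R*n1^2 + -4*R*n0)))) + (((-4*R*n0^2 + (-8*R*T + -8*R*T^2)) + (-5*R^2 + (-4*R^2*n3 + -4*R^2*n3^2))) + ((-4*R^2*n2 + (-4*R^2*n2^2 + -4*R^2*n1^2)) + (-4*R^2*n0 + (-4*R^2*n0^2 + -8*R^2*T)))))) + (((((-8*R^2*T^2 + -8*R^3) + (-4*R^4 + (Q*n1 + -1*Q^2))) + ((-4*Q^2*n3 + (-4*Q^2*n3^2 +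 -4*Q^2*n2)) + (-4*Q^2*n2^2 + (-4*Q^2*n1^2 + -4*Q^2*n0)))) + (((-4*Q^2*n0^2 + -8*Q^2*T) + (-8*Q^2*T^2 + (-8*Q^2*R + -8*Q^2*R^2))) + ((-4*Q^4 + (-1*P + -4*P*n3)) + (-4*P*n3^2 + (-4*P*n2 + -4*P*n2^2))))) + ((((-4*P*n1^2 + -3*P*n0) + (-4*P*n0^2 + (-8*P*T + -8*P*T^2))) + ((-8*P*R + (-8*P*R^2 + -8*P*Q^2)) + (-5*P^2 + (-4*P^2*n3 + -4*P^2*n3^2)))) + (((-4*P^2*n2 + (-4*P^2*n2^2 + -4*P^2*n1^2)) + (-4*P^2*n0 + (-4*P^2*n0^2 + -8*P^2*T))) + ((-8*P^2*T^2 + (-8*P^2*R + -8*P^2*R^2)) + (-8*P^2*Q^2 + (-8*P^3 + -4*P^4))))))), by ring⟩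
  exact (h1.mul h2).trans h3

set_option maxHeartbeats 2000000 in
theorem case_1101 (P Q R T n0 n1 n2 n3 : ℤ) :
    (((2*P+1)^2+(2*Q+1)^2-(2*R)^2-(2*T+1)^2)^2-4*((2*P+1)*(2*Q+1)-(2*R)*(2*T+1))^2)*(((2*P+1+2*n0)^2+(2*Q+1+2*n1)^2+(2*R+2*n2)^2+(2*T+1+2*n3)^2)^2-4*((2*P+1+2*n0)*(2*R+2*n2)+(2*Q+1+2*n1)*(2*T+1+2*n3))^2) ≡ 1-2*((2*P+1)^2+(2*Q+1)^2+(2*R)^2+(2*T+1)^2)+2*((2*P+1+2*n0)^2+(2*Q+1+2*n1)^2+(2*R+2*n2)^2+(2*T+1+2*n3)^2) [ZMOD 16] := by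
  have h1 : (((2*P+1)^2+(2*Q+1)^2-(2*R)^2-(2*T+1)^2)^2-4*((2*P+1)*(2*Q+1)-(2*R)*(2*T+1))^2) ≡ (((-3 + 8*T) + (8*T^2 + 8*R^2)) + ((8*Q + 8*Q^2) + (8*P + 8*P^2))) [ZMOD 16] := by
    rw [Int.modEq_iff_dvd]; exact ⟨(((((T + -2*T^3) + (-1*T^4 + -1*R)) + ((-2*R*T + 2*R^2) + (2*R^2*T + (2*R^2*T^2 + -1*R^4)))) + (((Q + 2*Q*T) + (2*Q*T^2 + -2*Q*R)) + ((-4*Q*R*T + 2*Q*R^2) + (2*Q^2*T + (2*Q^2*T^2 + 2*Q^2*R^2))))) + ((((-2*Q^3 + -1*Q^4) + (P + 2*P*T)) + ((2*P*T^2 + -2*P*R) + (-4*P*R*T + (2*P*R^2 + 2*P*Q)))) + (((-4*P*Q*R + -8*P*Q*R*T) + (2*P*Q^2 + (2*P^2*T + 2*P^2*T^2))) + ((2*P^2*R^2 + 2*P^2*Q) + (2*P^2*Q^2 + (-2*P^3 + -1*P^4)))))), by ring⟩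
  have h2 : (((2*P+1+2*n0)^2+(2*Q+1+2*n1)^2+(2*R+2*n2)^2+(2*T+1+2*n3)^2)^2-4*((2*P+1+2*n0)*(2*R+2*n2)+(2*Q+1+2*n1)*(2*T+1+2*n3))^2) ≡ (((5 + (8*n3 + 8*n3^2)) + ((8*n2^2 + 8*n1) + (8*n1^2 + 8*n0))) + (((8*n0^2 + 8*T) + (8*T^2 + 8*R^2)) + ((8*Q + 8*Q^2) + (8*P + 8*P^2)))) [ZMOD 16] := by
    rw [Int.modEq_iff_dvd]; exact ⟨(((((((-1*n3^2 + (-2*n3^3 + -1*n3^4)) + (n2 + (2*n2*n3 + -2*n2^2*n3))) + ((-2*n2^2*n3^2 + (-1*n2^4 + 2*n1*n3)) + ((2*n1*n3^2 + 2*n1*n2) + (4*n1*n2*n3 + -2*n1*n2^2)))) + (((-1*n1^2 + (2*n1^2*n3 + 2*n1^2*n3^2)) + ((-2*n1^2*n2^2 + -2*n1^3) + (-1*n1^4 + -1*n0))) + ((-2*n0*n3 + (-2*n0*n3^2 + 2*n0*n2)) + ((4*n0*n2*n3 + 2*n0*n2^2) + (-2*n0*n1 + 4*n0*n1*n2)))))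 + ((((8*n0*n1*n2*n3 + (-2*n0*n1^2 + -2*n0^2)) + (-2*n0^2*n3 + (-2*n0^2*n3^2 + 2*n0^2*n2^2))) + ((-2*n0^2*n1 + (-2*n0^2*n1^2 + -2*n0^3)) + ((-1*n0^4 + -3*T*n3) + (-6*T*n3^2 + -4*T*n3^3)))) + (((2*T*n2 + (-2*T*n2^2 + -4*T*n2^2*n3)) + ((2*T*n1 + 4*T*n1*n3) + (4*T*n1*n2 + 2*T*n1^2))) + ((4*T*n1^2*n3 + (-2*T*n0 + -4*T*n0*n3)) + ((4*T*n0*n2 + 8*T*n0*n1*n2) + (-2*T*n0^2 + -4*T*n0^2*n3)))))) + (((((-1*T^2 + (-6*T^2*n3 + -6*T^2*n3^2)) + (-2*T^2*n2^2 + (2*T^2*n1 + 2*T^2*n1^2))) + ((-2*T^2*n0 + (-2*T^2*n0^2 + -2*T^3)) + ((-4*T^3*n3 + -1*T^4) + (R + 2*R*n3)))) + (((-1*R*n2 + (-4*R*n2*n3 + -4*R*n2*n3^2)) + ((-4*R*n2^3 + 2*R*n1) + (4*R*n1*n3 + -4*R*n1*n2))) + ((-4*R*n1^2*n2 + (2*R*n0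 + 4*R*n0*n3)) + ((4*R*n0*n2 + 4*R*n0*n1) + (8*R*n0*n1*n3 + 4*R*n0^2*n2))))) + ((((2*R*T + (-4*R*T*n2 + -8*R*T*n2*n3)) + ((4*R*T*n1 + 4*R*T*n0) + (8*R*T*n0*n1 + -4*R*T^2*n2))) + ((-2*R^2*n3 + (-2*R^2*n3^2 + -6*R^2*n2^2)) + ((-2*R^2*n1 + -2*R^2*n1^2) + (2*R^2*n0 + 2*R^2*n0^2)))) + (((-2*R^2*T + (-4*R^2*T*n3 + -2*R^2*T^2)) + ((-4*R^3*n2 + -1*R^4) + (2*Q*n3 + 2*Q*n3^2))) + ((2*Q*n2 + (4*Q*n2*n3 + -2*Q*n2^2)) + ((-3*Q*n1 + 4*Q*n1*n3) + (4*Q*n1*n3^2 + -4*Q*n1*n2^2))))))) + ((((((-6*Q*n1^2 + (-4*Q*n1^3 + -2*Q*n0)) + (4*Q*n0*n2 + (8*Q*n0*n2*n3 + -4*Q*n0*n1))) + ((-2*Q*n0^2 + (-4*Q*n0^2*n1 + 2*Q*T)) + ((4*Q*T*n3 + 4*Q*T*n2) + (4*Q*T*n1 + 8*Q*T*n1*n3))))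 + (((8*Q*T*n0*n2 + (2*Q*T^2 + 4*Q*T^2*n1)) + ((2*Q*R + 4*Q*R*n3) + (-4*Q*R*n2 + -8*Q*R*n1*n2))) + ((4*Q*R*n0 + (8*Q*R*n0*n3 + 4*Q*R*T)) + ((8*Q*R*T*n0 + -2*Q*R^2) + (-4*Q*R^2*n1 + -1*Q^2))))) + ((((2*Q^2*n3 + (2*Q^2*n3^2 + -2*Q^2*n2^2)) + (-6*Q^2*n1 + (-6*Q^2*n1^2 + -2*Q^2*n0))) + ((-2*Q^2*n0^2 + (2*Q^2*T + 4*Q^2*T*n3)) + ((2*Q^2*T^2 + -4*Q^2*R*n2) + (-2*Q^2*R^2 + -2*Q^3)))) + (((-4*Q^3*n1 + (-1*Q^4 + -1*P)) + ((-2*P*n3 + -2*P*n3^2) + (2*P*n2 + 4*P*n2*n3))) + ((2*P*n2^2 + (-2*P*n1 + 4*P*n1*n2)) + ((8*P*n1*n2*n3 + -2*P*n1^2) + (-5*P*n0 + -4*P*n0*n3)))))) + (((((-4*P*n0*n3^2 + (4*P*n0*n2^2 + -4*P*n0*n1)) + (-4*P*n0*n1^2 + (-6*P*n0^2 + -4*P*n0^3)))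 + ((-2*P*T + (-4*P*T*n3 + 4*P*T*n2)) + ((8*P*T*n1*n2 + -4*P*T*n0) + (-8*P*T*n0*n3 + -2*P*T^2)))) + (((-4*P*T^2*n0 + (2*P*R + 4*P*R*n3)) + ((4*P*R*n2 + 4*P*R*n1) + (8*P*R*n1*n3 + 8*P*R*n0*n2))) + ((4*P*R*T + (8*P*R*T*n1 + 2*P*R^2)) + ((4*P*R^2*n0 + -2*P*Q) + (4*P*Q*n2 + 8*P*Q*n2*n3))))) + ((((-4*P*Q*n1 + (-4*P*Q*n0 + -8*P*Q*n0*n1)) + ((8*P*Q*T*n2 + 4*P*Q*R) + (8*P*Q*R*n3 + 8*P*Q*R*T))) + ((-2*P*Q^2 + (-4*P*Q^2*n0 + -2*P^2)) + ((-2*P^2*n3 + -2*P^2*n3^2) + (2*P^2*n2^2 + -2*P^2*n1)))) + (((-2*P^2*n1^2 + (-6*P^2*n0 + -6*P^2*n0^2)) + ((-2*P^2*T + -4*P^2*T*n3) + (-2*P^2*T^2 + 4*P^2*R*n2))) + ((2*P^2*R^2 + (-2*P^2*Q + -4*P^2*Q*n1)) + ((-2*P^2*Q^2 + -2*P^3)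 + (-4*P^3*n0 + -1*P^4)))))))), by ring⟩
  have h3 : ((((-3 + 8*T) + (8*T^2 + 8*R^2)) + ((8*Q + 8*Q^2) + (8*P + 8*P^2)))) * ((((5 + (8*n3 + 8*n3^2)) + ((8*n2^2 + 8*n1) + (8*n1^2 + 8*n0))) + (((8*n0^2 + 8*T) + (8*T^2 + 8*R^2)) + ((8*Q + 8*Q^2) + (8*P + 8*P^2))))) ≡ 1-2*((2*P+1)^2+(2*Q+1)^2+(2*R)^2+(2*T+1)^2)+2*((2*P+1+2*n0)^2+(2*Q+1+2*n1)^2+(2*R+2*n2)^2+(2*T+1+2*n3)^2) [ZMOD 16] := by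
    rw [Int.modEq_iff_dvd]; exact ⟨((((((1 + 2*n3) + (2*n3^2 + (2*n2^2 + 2*n1))) + ((2*n1^2 + (2*n0 + 2*n0^2)) + (-1*T + (-3*T*n3 + -4*T*n3^2)))) + (((-4*T*n2^2 + -4*T*n1) + (-4*T*n1^2 + (-4*T*n0 + -4*T*n0^2))) + ((-5*T^2 + (-4*T^2*n3 + -4*T^2*n3^2)) + (-4*T^2*n2^2 + (-4*T^2*n1 + -4*T^2*n1^2))))) + ((((-4*T^2*n0 + -4*T^2*n0^2) + (-8*T^3 + (-4*T^4 + R*n2))) + ((-1*R^2 + (-4*R^2*n3 + -4*R^2*n3^2)) + (-4*R^2*n2^2 + (-4*R^2*n1 + -4*R^2*n1^2)))) + (((-4*R^2*n0 + (-4*R^2*n0^2 + -8*R^2*T)) + (-8*R^2*T^2 + (-4*R^4 + -1*Q))) + ((-4*Q*n3 + (-4*Q*n3^2 + -4*Q*n2^2)) + (-3*Q*n1 + (-4*Q*n1^2 + -4*Q*n0)))))) + (((((-4*Q*n0^2 + -8*Q*T) + (-8*Q*T^2 + (-8*Q*R^2 + -5*Q^2))) + ((-4*Q^2*n3 + (-4*Q^2*n3^2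 + -4*Q^2*n2^2)) + (-4*Q^2*n1 + (-4*Q^2*n1^2 + -4*Q^2*n0)))) + (((-4*Q^2*n0^2 + -8*Q^2*T) + (-8*Q^2*T^2 + (-8*Q^2*R^2 + -8*Q^3))) + ((-4*Q^4 + (-1*P + -4*P*n3)) + (-4*P*n3^2 + (-4*P*n2^2 + -4*P*n1))))) + ((((-4*P*n1^2 + -3*P*n0) + (-4*P*n0^2 + (-8*P*T + -8*P*T^2))) + ((-8*P*R^2 + (-8*P*Q + -8*P*Q^2)) + (-5*P^2 + (-4*P^2*n3 + -4*P^2*n3^2)))) + (((-4*P^2*n2^2 + (-4*P^2*n1 + -4*P^2*n1^2)) + (-4*P^2*n0 + (-4*P^2*n0^2 + -8*P^2*T))) + ((-8*P^2*T^2 + (-8*P^2*R^2 + -8*P^2*Q)) + (-8*P^2*Q^2 + (-8*P^3 + -4*P^4))))))), by ring⟩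
  exact (h1.mul h2).trans h3

set_option maxHeartbeats 2000000 in
theorem case_1110 (P Q R T n0 n1 n2 n3 : ℤ) :
    (((2*P+1)^2+(2*Q+1)^2-(2*R+1)^2-(2*T)^2)^2-4*((2*P+1)*(2*Q+1)-(2*R+1)*(2*T))^2)*(((2*P+1+2*n0)^2+(2*Q+1+2*n1)^2+(2*R+1+2*n2)^2+(2*T+2*n3)^2)^2-4*((2*P+1+2*n0)*(2*R+1+2*n2)+(2*Q+1+2*n1)*(2*T+2*n3))^2) ≡ 1-2*((2*P+1)^2+(2*Q+1)^2+(2*R+1)^2+(2*T)^2)+2*((2*P+1+2*n0)^2+(2*Q+1+2*n1)^2+(2*R+1+2*n2)^2+(2*T+2*n3)^2) [ZMOD 16] := by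
  have h1 : (((2*P+1)^2+(2*Q+1)^2-(2*R+1)^2-(2*T)^2)^2-4*((2*P+1)*(2*Q+1)-(2*R+1)*(2*T))^2) ≡ (((-3 + 8*T^2) + (8*R + 8*R^2)) + ((8*Q + 8*Q^2) + (8*P + 8*P^2))) [ZMOD 16] := by
    rw [Int.modEq_iff_dvd]; exact ⟨(((((-1*T + 2*T^2) + (-1*T^4 + R)) + ((-2*R*T + 2*R*T^2) + (2*R^2*T^2 + (-2*R^3 + -1*R^4)))) + (((Q + -2*Q*T) + (2*Q*T^2 + 2*Q*R)) + ((-4*Q*R*T + 2*Q*R^2) + (2*Q^2*T^2 + (2*Q^2*R + 2*Q^2*R^2))))) + ((((-2*Q^3 + -1*Q^4) + (P + -2*P*T)) + ((2*P*T^2 + 2*P*R) + (-4*P*R*T + (2*P*R^2 + 2*P*Q)))) + (((-4*P*Q*T + -8*P*Q*R*T) + (2*P*Q^2 + (2*P^2*T^2 + 2*P^2*R))) + ((2*P^2*R^2 + 2*P^2*Q) + (2*P^2*Q^2 + (-2*P^3 + -1*P^4)))))), by ring⟩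
  have h2 : (((2*P+1+2*n0)^2+(2*Q+1+2*n1)^2+(2*R+1+2*n2)^2+(2*T+2*n3)^2)^2-4*((2*P+1+2*n0)*(2*R+1+2*n2)+(2*Q+1+2*n1)*(2*T+2*n3))^2) ≡ (((5 + (8*n3^2 + 8*n2)) + ((8*n2^2 + 8*n1) + (8*n1^2 + 8*n0))) + (((8*n0^2 + 8*T^2) + (8*R + 8*R^2)) + ((8*Q + 8*Q^2) + (8*P + 8*P^2)))) [ZMOD 16] := by
    rw [Int.modEq_iff_dvd]; exact ⟨(((((((n3 + (-1*n3^4 + 2*n2*n3)) + (-2*n2*n3^2 + (-1*n2^2 + -2*n2^2*n3^2))) + ((-2*n2^3 + (-1*n2^4 + -1*n1)) + ((2*n1*n3 + 2*n1*n3^2) + (-2*n1*n2 + 4*n1*n2*n3)))) + (((-2*n1*n2^2 + (-2*n1^2 + 2*n1^2*n3^2)) + ((-2*n1^2*n2 + -2*n1^2*n2^2) + (-2*n1^3 + -1*n1^4))) + ((2*n0*n3 + (-2*n0*n3^2 + 2*n0*n2)) + ((4*n0*n2*n3 + 2*n0*n2^2) + (-2*n0*n1 + 4*n0*n1*n3)))))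 + ((((8*n0*n1*n2*n3 + (-2*n0*n1^2 + -1*n0^2)) + (-2*n0^2*n3^2 + (2*n0^2*n2 + 2*n0^2*n2^2))) + ((-2*n0^2*n1 + (-2*n0^2*n1^2 + -2*n0^3)) + ((-1*n0^4 + T) + (-1*T*n3 + -4*T*n3^3)))) + (((2*T*n2 + (-4*T*n2*n3 + -4*T*n2^2*n3)) + ((2*T*n1 + 4*T*n1*n3) + (4*T*n1*n2 + 4*T*n1^2*n3))) + ((2*T*n0 + (-4*T*n0*n3 + 4*T*n0*n2)) + ((4*T*n0*n1 + 8*T*n0*n1*n2) + (-4*T*n0^2*n3 + -6*T^2*n3^2)))))) + (((((-2*T^2*n2 + (-2*T^2*n2^2 + 2*T^2*n1)) + (2*T^2*n1^2 + (-2*T^2*n0 + -2*T^2*n0^2))) + ((-4*T^3*n3 + (-1*T^4 + 2*R*n3)) + ((-2*R*n3^2 + -3*R*n2) + (-4*R*n2*n3^2 + -6*R*n2^2)))) + (((-4*R*n2^3 + (-2*R*n1 + 4*R*n1*n3)) + ((-4*R*n1*n2 + -2*R*n1^2) + (-4*R*n1^2*n2 + 2*R*n0))) + ((4*R*n0*n3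 + (4*R*n0*n2 + 8*R*n0*n1*n3)) + ((2*R*n0^2 + 4*R*n0^2*n2) + (2*R*T + -4*R*T*n3))))) + ((((-8*R*T*n2*n3 + (4*R*T*n1 + 4*R*T*n0)) + ((8*R*T*n0*n1 + -2*R*T^2) + (-4*R*T^2*n2 + -1*R^2))) + ((-2*R^2*n3^2 + (-6*R^2*n2 + -6*R^2*n2^2)) + ((-2*R^2*n1 + -2*R^2*n1^2) + (2*R^2*n0 + 2*R^2*n0^2)))) + (((-4*R^2*T*n3 + (-2*R^2*T^2 + -2*R^3)) + ((-4*R^3*n2 + -1*R^4) + (-1*Q + 2*Q*n3))) + ((2*Q*n3^2 + (-2*Q*n2 + 4*Q*n2*n3)) + ((-2*Q*n2^2 + -5*Q*n1) + (4*Q*n1*n3^2 + -4*Q*n1*n2))))))) + ((((((-4*Q*n1*n2^2 + (-6*Q*n1^2 + -4*Q*n1^3)) + (-2*Q*n0 + (4*Q*n0*n3 + 8*Q*n0*n2*n3))) + ((-4*Q*n0*n1 + (-2*Q*n0^2 + -4*Q*n0^2*n1)) + ((2*Q*T + 4*Q*T*n3) + (4*Q*T*n2 + 8*Q*T*n1*n3))))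 + (((4*Q*T*n0 + (8*Q*T*n0*n2 + 2*Q*T^2)) + ((4*Q*T^2*n1 + -2*Q*R) + (4*Q*R*n3 + -4*Q*R*n2))) + ((-4*Q*R*n1 + (-8*Q*R*n1*n2 + 8*Q*R*n0*n3)) + ((4*Q*R*T + 8*Q*R*T*n0) + (-2*Q*R^2 + -4*Q*R^2*n1))))) + ((((-2*Q^2 + (2*Q^2*n3^2 + -2*Q^2*n2)) + (-2*Q^2*n2^2 + (-6*Q^2*n1 + -6*Q^2*n1^2))) + ((-2*Q^2*n0 + (-2*Q^2*n0^2 + 4*Q^2*T*n3)) + ((2*Q^2*T^2 + -2*Q^2*R) + (-4*Q^2*R*n2 + -2*Q^2*R^2)))) + (((-2*Q^3 + (-4*Q^3*n1 + -1*Q^4)) + ((2*P*n3 + -2*P*n3^2) + (2*P*n2 + 4*P*n2*n3))) + ((2*P*n2^2 + (-2*P*n1 + 4*P*n1*n3)) + ((8*P*n1*n2*n3 + -2*P*n1^2) + (-3*P*n0 + -4*P*n0*n3^2)))))) + (((((4*P*n0*n2 + (4*P*n0*n2^2 + -4*P*n0*n1)) + (-4*P*n0*n1^2 + (-6*P*n0^2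 + -4*P*n0^3))) + ((2*P*T + (-4*P*T*n3 + 4*P*T*n2)) + ((4*P*T*n1 + 8*P*T*n1*n2) + (-8*P*T*n0*n3 + -2*P*T^2)))) + (((-4*P*T^2*n0 + (2*P*R + 4*P*R*n3)) + ((4*P*R*n2 + 8*P*R*n1*n3) + (4*P*R*n0 + 8*P*R*n0*n2))) + ((4*P*R*T + (8*P*R*T*n1 + 2*P*R^2)) + ((4*P*R^2*n0 + -2*P*Q) + (4*P*Q*n3 + 8*P*Q*n2*n3))))) + ((((-4*P*Q*n1 + (-4*P*Q*n0 + -8*P*Q*n0*n1)) + ((4*P*Q*T + 8*P*Q*T*n2) + (8*P*Q*R*n3 + 8*P*Q*R*T))) + ((-2*P*Q^2 + (-4*P*Q^2*n0 + -1*P^2)) + ((-2*P^2*n3^2 + 2*P^2*n2) + (2*P^2*n2^2 + -2*P^2*n1)))) + (((-2*P^2*n1^2 + (-6*P^2*n0 + -6*P^2*n0^2)) + ((-4*P^2*T*n3 + -2*P^2*T^2) + (2*P^2*R + 4*P^2*R*n2))) + ((2*P^2*R^2 + (-2*P^2*Q + -4*P^2*Q*n1)) + ((-2*P^2*Q^2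 + -2*P^3) + (-4*P^3*n0 + -1*P^4)))))))), by ring⟩
  have h3 : ((((-3 + 8*T^2) + (8*R + 8*R^2)) + ((8*Q + 8*Q^2) + (8*P + 8*P^2)))) * ((((5 + (8*n3^2 + 8*n2)) + ((8*n2^2 + 8*n1) + (8*n1^2 + 8*n0))) + (((8*n0^2 + 8*T^2) + (8*R + 8*R^2)) + ((8*Q + 8*Q^2) + (8*P + 8*P^2))))) ≡ 1-2*((2*P+1)^2+(2*Q+1)^2+(2*R+1)^2+(2*T)^2)+2*((2*P+1+2*n0)^2+(2*Q+1+2*n1)^2+(2*R+1+2*n2)^2+(2*T+2*n3)^2) [ZMOD 16] := by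
    rw [Int.modEq_iff_dvd]; exact ⟨((((((1 + 2*n3^2) + (2*n2 + (2*n2^2 + 2*n1))) + ((2*n1^2 + (2*n0 + 2*n0^2)) + (T*n3 + (-1*T^2 + -4*T^2*n3^2)))) + (((-4*T^2*n2 + -4*T^2*n2^2) + (-4*T^2*n1 + (-4*T^2*n1^2 + -4*T^2*n0))) + ((-4*T^2*n0^2 + (-4*T^4 + -1*R)) + (-4*R*n3^2 + (-3*R*n2 + -4*R*n2^2))))) + ((((-4*R*n1 + -4*R*n1^2) + (-4*R*n0 + (-4*R*n0^2 + -8*R*T^2))) + ((-5*R^2 + (-4*R^2*n3^2 + -4*R^2*n2)) + (-4*R^2*n2^2 + (-4*R^2*n1 + -4*R^2*n1^2)))) + (((-4*R^2*n0 + (-4*R^2*n0^2 + -8*R^2*T^2)) + (-8*R^3 + (-4*R^4 + -1*Q))) + ((-4*Q*n3^2 + (-4*Q*n2 + -4*Q*n2^2)) + (-3*Q*n1 + (-4*Q*n1^2 + -4*Q*n0)))))) + (((((-4*Q*n0^2 + -8*Q*T^2) + (-8*Q*R + (-8*Q*R^2 + -5*Q^2))) + ((-4*Q^2*n3^2 +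 (-4*Q^2*n2 + -4*Q^2*n2^2)) + (-4*Q^2*n1 + (-4*Q^2*n1^2 + -4*Q^2*n0)))) + (((-4*Q^2*n0^2 + -8*Q^2*T^2) + (-8*Q^2*R + (-8*Q^2*R^2 + -8*Q^3))) + ((-4*Q^4 + (-1*P + -4*P*n3^2)) + (-4*P*n2 + (-4*P*n2^2 + -4*P*n1))))) + ((((-4*P*n1^2 + -3*P*n0) + (-4*P*n0^2 + (-8*P*T^2 + -8*P*R))) + ((-8*P*R^2 + (-8*P*Q + -8*P*Q^2)) + (-5*P^2 + (-4*P^2*n3^2 + -4*P^2*n2)))) + (((-4*P^2*n2^2 + (-4*P^2*n1 + -4*P^2*n1^2)) + (-4*P^2*n0 + (-4*P^2*n0^2 + -8*P^2*T^2))) + ((-8*P^2*R + (-8*P^2*R^2 + -8*P^2*Q)) + (-8*P^2*Q^2 + (-8*P^3 + -4*P^4))))))), by ring⟩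
  exact (h1.mul h2).trans h3

set_option maxHeartbeats 2000000 in
theorem D4_mul_D4_mod_sixteen
    (a0 a1 a2 a3 a4 a5 a6 a7 a8 a9 a10 a11 a12 a13 a14 a15 : ℤ)
    (b0 b1 b2 b3 c0 c1 c2 c3 d0 d1 d2 d3 d4 d5 d6 d7 : ℤ)
    (hb0 : b0 = (a0 + a8) + (a4 + a12)) (hb1 : b1 = (a1 + a9) + (a5 + a13))
    (hb2 : b2 = (a2 + a10) + (a6 + a14)) (hb3 : b3 = (a3 + a11) + (a7 + a15))
    (hc0 : c0 = (a0 + a8) - (a4 + a12)) (hc1 : c1 = (a1 + a9) - (a5 + a13))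
    (hc2 : c2 = (a2 + a10) - (a6 + a14)) (hc3 : c3 = (a3 + a11) - (a7 + a15))
    (hd0 : d0 = a0 - a8) (hd1 : d1 = a1 - a9) (hd2 : d2 = a2 - a10) (hd3 : d3 = a3 - a11)
    (hd4 : d4 = a4 - a12) (hd5 : d5 = a5 - a13) (hd6 : d6 = a6 - a14) (hd7 : d7 = a7 - a15)
    (h : ¬ (b0 + b2 ≡ b1 + b3 [ZMOD 2])) :
    D4 b0 b1 b2 b3 * D4 c0 c1 c2 c3 ≡
      1 - 8 * (d0 * d2 + d4 * d6 + d1 * d3 + d5 * d7) [ZMOD 16] := by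
  set p : ℤ := (a0+a8)+(a2+a10) with hpd
  set q : ℤ := (a1+a9)+(a3+a11) with hqd
  set r : ℤ := (a4+a12)+(a6+a14) with hrd
  set t : ℤ := (a5+a13)+(a7+a15) with htd
  set u : ℤ := (a0+a8)-(a2+a10) with hud
  set v : ℤ := (a1+a9)-(a3+a11) with hvd
  set w : ℤ := (a4+a12)-(a6+a14) with hwd
  set z : ℤ := (a5+a13)-(a7+a15) with hzd
  set n0 : ℤ := -(a2+a10) with hn0d
  set n1 : ℤ := -(a3+a11) with hn1d
  set n2 : ℤ := -(a6+a14) with hn2d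
  set n3 : ℤ := -(a7+a15) with hn3d
  have hodd : (p + q + r + t) % 2 = 1 := by
    simp only [Int.ModEq] at h; omega
  have hun0 : u = p + 2*n0 := by rw [hud, hpd, hn0d]; ring
  have hun1 : v = q + 2*n1 := by rw [hvd, hqd, hn1d]; ring
  have hun2 : w = r + 2*n2 := by rw [hwd, hrd, hn2d]; ring
  have hun3 : z = t + 2*n3 := by rw [hzd, htd, hn3d]; ring
  have e1 := D4_eq b0 b1 b2 b3
  have e2 := D4_eq c0 c1 c2 c3
  have r1 : b0+b1+b2+b3 = p+q+r+t := by omega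
  have r2 : b0-b1+b2-b3 = p-q+r-t := by omega
  have r3 : b0-b2 = u+w := by omega
  have r4 : b1-b3 = v+z := by omega
  have r5 : c0+c1+c2+c3 = p+q-r-t := by omega
  have r6 : c0-c1+c2-c3 = p-q-r+t := by omega
  have r7 : c0-c2 = u-w := by omega
  have r8 : c1-c3 = v-z := by omega
  have comm : ∀ A1 B1 C1 A2 B2 C2 : ℤ, A1*B1*C1*(A2*B2*C2) = A1*A2*(B1*B2)*(C1*C2) := by
    intros; ring
  have key2a : (p+q+r+t)*(p+q-r-t)*((p-q+r-t)*(p-q-r+t))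
      = (p^2+q^2-r^2-t^2)^2-4*(p*q-r*t)^2 := by ring
  have key2b : ((u+w)^2+(v+z)^2)*((u-w)^2+(v-z)^2)
      = (u^2+v^2+w^2+z^2)^2-4*(u*w+v*z)^2 := by ring
  have step3 : (1-2*(p^2+q^2+r^2+t^2)+2*(u^2+v^2+w^2+z^2) : ℤ) ≡
      1 - 8 * (d0 * d2 + d4 * d6 + d1 * d3 + d5 * d7) [ZMOD 16] := by
    rw [Int.modEq_iff_dvd]
    exact ⟨a0*a10+a8*a2+a1*a11+a9*a3+a4*a14+a12*a6+a5*a15+a13*a7, by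
      rw [hpd, hqd, hrd, htd, hud, hvd, hwd, hzd, hd0, hd1, hd2, hd3, hd4, hd5, hd6, hd7]; ring⟩
  have mid : ((p^2+q^2-r^2-t^2)^2-4*(p*q-r*t)^2)*((u^2+v^2+w^2+z^2)^2-4*(u*w+v*z)^2) ≡
      1-2*(p^2+q^2+r^2+t^2)+2*(u^2+v^2+w^2+z^2) [ZMOD 16] := by
    rw [hun0, hun1, hun2, hun3]
    obtain ⟨P, hP⟩ := Int.even_or_odd' p
    obtain ⟨Q, hQ⟩ := Int.even_or_odd' q
    obtain ⟨R, hR⟩ := Int.even_or_odd' r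
    obtain ⟨T, hT⟩ := Int.even_or_odd' t
    rcases hP with hP | hP <;> rcases hQ with hQ | hQ <;>
      rcases hR with hR | hR <;> rcases hT with hT | hT <;>
      rw [hP, hQ, hR, hT]
    · exfalso; omega
    · exact case_0001 P Q R T n0 n1 n2 n3
    · exact case_0010 P Q R T n0 n1 n2 n3
    · exfalso; omega
    · exact case_0100 P Q R T n0 n1 n2 n3
    · exfalso; omega
    · exfalso; omega
    · exact case_0111 P Q R T n0 n1 n2 n3
    · exact case_1000 P Q R T n0 n1 n2 n3
    · exfalso; omega
    · exfalso; omega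
    · exact case_1011 P Q R T n0 n1 n2 n3
    · exfalso; omega
    · exact case_1101 P Q R T n0 n1 n2 n3
    · exact case_1110 P Q R T n0 n1 n2 n3
    · exfalso; omega
  rw [e1, e2, r1, r2, r3, r4, r5, r6, r7, r8, comm, key2a, key2b]
  exact mid.trans step3
end

section
/- Let a₀, …, a₁₅ be integers and suppose b₀ + b₂ ≢ b₁ + b₃ (mod 2). Then F(d₀, d₁, …, d₇)² ≡ 1 − 8(d₀d₂ + d₄d₆ + d₁d₃ + d₅d₇) (mod 16). -/
/-- `f(x, y, z, w) = x² + y² - z² - w²`. -/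
def fP (x y z w : ℤ) : ℤ := x ^ 2 + y ^ 2 - z ^ 2 - w ^ 2

/-- `F(w₀,…,w₇) = f(w₀-w₂, w₁-w₃, w₄-w₆, w₅-w₇) ⬝ f(w₅+w₇, w₀+w₂, w₁+w₃, w₄+w₆)`. -/
def FP (w0 w1 w2 w3 w4 w5 w6 w7 : ℤ) : ℤ :=
  fP (w0 - w2) (w1 - w3) (w4 - w6) (w5 - w7) * fP (w5 + w7) (w0 + w2) (w1 + w3) (w4 + w6)

private lemma evsq (x : ℤ) : ∃ r, x^2 = 2*r + x := by
  obtain ⟨c, hc⟩ := Int.even_mul_succ_self (x-1)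
  exact ⟨c, by linear_combination hc⟩

private lemma oddsq (x k : ℤ) (h : x = 2*k+1) : ∃ e, x^2 = 8*e+1 := by
  obtain ⟨c, hc⟩ := Int.even_mul_succ_self k
  exact ⟨c, by subst h; linear_combination 4*hc⟩

private lemma abstractKey (P A B U V S m e f g rm w : ℤ)
    (hP : P = A*B) (hA2 : A^2 = 8*e+1) (hB2 : B^2 = 8*f+1)
    (hABUV : A^2+B^2 = 2*U^2+2*V^2) (hU2 : U^2 = 8*g+1) (hV : V = 2*m)
    (hm2 : m^2 = 2*rm+m) (hmw : m + S = 2*w) :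
    1 - 8*S - P^2 = 16 * (-(4*e*f + g + rm + w)) := by
  linear_combination (-(P + A*B)) * hP + (1 - B^2) * hA2 + (-8*e) * hB2
    + (-1) * hABUV + (-2) * hU2 + (-2*(V + 2*m)) * hV + (-8) * hm2 + (-8) * hmw


private lemma keyLem (d0 d1 d2 d3 d4 d5 d6 d7 : ℤ)
    (h : (d0+d2+d4+d6) % 2 ≠ (d1+d3+d5+d7) % 2) :
    FP d0 d1 d2 d3 d4 d5 d6 d7 ^ 2 ≡
      1 - 8 * (d0 * d2 + d4 * d6 + d1 * d3 + d5 * d7) [ZMOD 16] := by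
  rw [Int.modEq_iff_dvd]
  obtain ⟨r0, hr0⟩ := evsq d0
  obtain ⟨r1, hr1⟩ := evsq d1
  obtain ⟨r2, hr2⟩ := evsq d2
  obtain ⟨r3, hr3⟩ := evsq d3
  obtain ⟨r4, hr4⟩ := evsq d4
  obtain ⟨r5, hr5⟩ := evsq d5
  obtain ⟨r6, hr6⟩ := evsq d6
  obtain ⟨r7, hr7⟩ := evsq d7
  rcases Int.even_or_odd (d0+d2+d4+d6) with ⟨p, hp0⟩ | ⟨p, hp0⟩
  · -- d0+d2+d4+d6 even, so d1+d3+d5+d7 odd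
    have hp : d0+d2+d4+d6 = 2*p := by omega
    obtain ⟨q, hq⟩ : ∃ q, d1+d3+d5+d7 = 2*q+1 := ⟨(d1+d3+d5+d7)/2, by omega⟩
    -- V := d1^2+d3^2-d5^2-d7^2-2*d0*d2+2*d4*d6 is odd, U := d0^2+d2^2-d4^2-d6^2-2*d1*d3+2*d5*d7 = 2*m
    set s : ℤ := r1+r3-r5-r7+q-d5-d7-d0*d2+d4*d6 with hs
    set m : ℤ := r0+r2-r4-r6+p-d4-d6-d1*d3+d5*d7 with hm
    have hVodd : d1^2+d3^2-d5^2-d7^2-2*d0*d2+2*d4*d6 = 2*s+1 := by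
      rw [hs]; linear_combination hr1 + hr3 - hr5 - hr7 + hq
    have hUev : d0^2+d2^2-d4^2-d6^2-2*d1*d3+2*d5*d7 = 2*m := by
      rw [hm]; linear_combination hr0 + hr2 - hr4 - hr6 + hp
    obtain ⟨g, hg⟩ := oddsq _ _ hVodd
    have hAodd : (d0-d2)^2 + (d1-d3)^2 - (d4-d6)^2 - (d5-d7)^2 = 2*(m+s)+1 := by
      linear_combination hUev + hVodd
    have hBodd : (d5+d7)^2 + (d0+d2)^2 - (d1+d3)^2 - (d4+d6)^2 = 2*(m-s-1)+1 := by
      linear_combination hUev - hVodd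
    obtain ⟨e, he⟩ := oddsq _ _ hAodd
    obtain ⟨f, hf⟩ := oddsq _ _ hBodd
    obtain ⟨rm, hrm⟩ := evsq m
    set w : ℤ := (p-d4)^2 + (p-d4)*(d4-d6) + d5*d7 with hw
    have h2mw : 2*(m + (d0*d2 + d4*d6 + d1*d3 + d5*d7)) = 2*(2*w) := by
      rw [hm, hw]; linear_combination -hr0 - hr2 + hr4 + hr6 + (d0+d2-d4-d6+2*p-1)*hp
    have hmw := mul_left_cancel₀ (by norm_num : (2:ℤ) ≠ 0) h2mw
    refine ⟨-(4*e*f + g + rm + w), ?_⟩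
    have := abstractKey (FP d0 d1 d2 d3 d4 d5 d6 d7)
      ((d0-d2)^2 + (d1-d3)^2 - (d4-d6)^2 - (d5-d7)^2)
      ((d5+d7)^2 + (d0+d2)^2 - (d1+d3)^2 - (d4+d6)^2)
      (d1^2+d3^2-d5^2-d7^2-2*d0*d2+2*d4*d6)
      (d0^2+d2^2-d4^2-d6^2-2*d1*d3+2*d5*d7)
      (d0 * d2 + d4 * d6 + d1 * d3 + d5 * d7) m e f g rm w
      (by unfold FP fP; ring) he hf (by ring) hg hUev hrm hmw
    linarith [this]
  · -- d0+d2+d4+d6 odd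
    have hp : d0+d2+d4+d6 = 2*p+1 := by omega
    obtain ⟨q, hq⟩ : ∃ q, d1+d3+d5+d7 = 2*q := ⟨(d1+d3+d5+d7)/2, by omega⟩
    set s : ℤ := r0+r2-r4-r6+p-d4-d6-d1*d3+d5*d7 with hs
    set m : ℤ := r1+r3-r5-r7+q-d5-d7-d0*d2+d4*d6 with hm
    have hUodd : d0^2+d2^2-d4^2-d6^2-2*d1*d3+2*d5*d7 = 2*s+1 := by
      rw [hs]; linear_combination hr0 + hr2 - hr4 - hr6 + hp
    have hVev : d1^2+d3^2-d5^2-d7^2-2*d0*d2+2*d4*d6 = 2*m := by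
      rw [hm]; linear_combination hr1 + hr3 - hr5 - hr7 + hq
    obtain ⟨g, hg⟩ := oddsq _ _ hUodd
    have hAodd : (d0-d2)^2 + (d1-d3)^2 - (d4-d6)^2 - (d5-d7)^2 = 2*(s+m)+1 := by
      linear_combination hUodd + hVev
    have hBodd : (d5+d7)^2 + (d0+d2)^2 - (d1+d3)^2 - (d4+d6)^2 = 2*(s-m)+1 := by
      linear_combination hUodd - hVev
    obtain ⟨e, he⟩ := oddsq _ _ hAodd
    obtain ⟨f, hf⟩ := oddsq _ _ hBodd
    obtain ⟨rm, hrm⟩ := evsq m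
    set w : ℤ := (q-d5)^2 + (q-d5)*(d5-d7) + d4*d6 with hw
    have h2mw : 2*(m + (d0*d2 + d4*d6 + d1*d3 + d5*d7)) = 2*(2*w) := by
      rw [hm, hw]; linear_combination -hr1 - hr3 + hr5 + hr7 + (d1+d3-d5-d7+2*q-1)*hq
    have hmw := mul_left_cancel₀ (by norm_num : (2:ℤ) ≠ 0) h2mw
    refine ⟨-(4*e*f + g + rm + w), ?_⟩
    have := abstractKey (FP d0 d1 d2 d3 d4 d5 d6 d7)
      ((d0-d2)^2 + (d1-d3)^2 - (d4-d6)^2 - (d5-d7)^2)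
      ((d5+d7)^2 + (d0+d2)^2 - (d1+d3)^2 - (d4+d6)^2)
      (d0^2+d2^2-d4^2-d6^2-2*d1*d3+2*d5*d7)
      (d1^2+d3^2-d5^2-d7^2-2*d0*d2+2*d4*d6)
      (d0 * d2 + d4 * d6 + d1 * d3 + d5 * d7) m e f g rm w
      (by unfold FP fP; ring) he hf (by ring) hg hVev hrm hmw
    linarith [this]

theorem FP_sq_mod_sixteen
    (a0 a1 a2 a3 a4 a5 a6 a7 a8 a9 a10 a11 a12 a13 a14 a15 : ℤ)
    (b0 b1 b2 b3 d0 d1 d2 d3 d4 d5 d6 d7 : ℤ)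
    (hb0 : b0 = (a0 + a8) + (a4 + a12)) (hb1 : b1 = (a1 + a9) + (a5 + a13))
    (hb2 : b2 = (a2 + a10) + (a6 + a14)) (hb3 : b3 = (a3 + a11) + (a7 + a15))
    (hd0 : d0 = a0 - a8) (hd1 : d1 = a1 - a9) (hd2 : d2 = a2 - a10) (hd3 : d3 = a3 - a11)
    (hd4 : d4 = a4 - a12) (hd5 : d5 = a5 - a13) (hd6 : d6 = a6 - a14) (hd7 : d7 = a7 - a15)
    (h : ¬ (b0 + b2 ≡ b1 + b3 [ZMOD 2])) :
    FP d0 d1 d2 d3 d4 d5 d6 d7 ^ 2 ≡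
      1 - 8 * (d0 * d2 + d4 * d6 + d1 * d3 + d5 * d7) [ZMOD 16] := by
  refine keyLem d0 d1 d2 d3 d4 d5 d6 d7 ?_
  simp only [Int.ModEq] at h
  subst hb0 hb1 hb2 hb3 hd0 hd1 hd2 hd3 hd4 hd5 hd6 hd7
  omega
end

section
/- Let a₀, …, a₁₅ be integers and suppose b₀ + b₂ ≡ b₁ + b₃ (mod 2). Then F(d₀, d₁, …, d₇) ≡ 0 (mod 8). -/
private lemma key (p q r s t : ℤ) (h : (p + q + r + s) % 2 = 0) :
    (8 : ℤ) ∣ (p^2 + q^2 - r^2 - s^2 - 4*t) * (s^2 + p^2 - q^2 - r^2) := by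
  obtain ⟨P, hp | hp⟩ := Int.even_or_odd' p <;>
  obtain ⟨Q, hq | hq⟩ := Int.even_or_odd' q <;>
  obtain ⟨R, hr | hr⟩ := Int.even_or_odd' r <;>
  obtain ⟨S, hs | hs⟩ := Int.even_or_odd' s <;>
  subst hp hq hr hs
  -- (0,0,0,0)
  · have h8 : (8:ℤ) = 4 * 2 := by norm_num
    rw [h8]
    exact mul_dvd_mul ⟨P^2+Q^2-R^2-S^2-t, by ring⟩ ⟨2*(S^2+P^2-Q^2-R^2), by ring⟩
  -- (0,0,0,1)
  · omega
  -- (0,0,1,0)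
  · omega
  -- (0,0,1,1)
  · have h8 : (8:ℤ) = 2 * 4 := by norm_num
    rw [h8]
    exact mul_dvd_mul ⟨2*(P^2+Q^2-R^2-R-S^2-S-t)-1, by ring⟩
      ⟨S^2+S+P^2-Q^2-R^2-R, by ring⟩
  -- (0,1,0,0)
  · omega
  -- (0,1,0,1)
  · have h8 : (8:ℤ) = 4 * 2 := by norm_num
    rw [h8]
    exact mul_dvd_mul ⟨P^2+Q^2+Q-R^2-S^2-S-t, by ring⟩
      ⟨2*(S^2+S+P^2-Q^2-Q-R^2), by ring⟩
  -- (0,1,1,0)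
  · have h8 : (8:ℤ) = 4 * 2 := by norm_num
    rw [h8]
    exact mul_dvd_mul ⟨P^2+Q^2+Q-R^2-R-S^2-t, by ring⟩
      ⟨2*(S^2+P^2-Q^2-Q-R^2-R)-1, by ring⟩
  -- (0,1,1,1)
  · omega
  -- (1,0,0,0)
  · omega
  -- (1,0,0,1)
  · have h8 : (8:ℤ) = 4 * 2 := by norm_num
    rw [h8]
    exact mul_dvd_mul ⟨P^2+P+Q^2-R^2-S^2-S-t, by ring⟩
      ⟨2*(S^2+S+P^2+P-Q^2-R^2)+1, by ring⟩
  -- (1,0,1,0)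
  · have h8 : (8:ℤ) = 4 * 2 := by norm_num
    rw [h8]
    exact mul_dvd_mul ⟨P^2+P+Q^2-R^2-R-S^2-t, by ring⟩
      ⟨2*(S^2+P^2+P-Q^2-R^2-R), by ring⟩
  -- (1,0,1,1)
  · omega
  -- (1,1,0,0)
  · have h8 : (8:ℤ) = 2 * 4 := by norm_num
    rw [h8]
    exact mul_dvd_mul ⟨2*(P^2+P+Q^2+Q-R^2-S^2-t)+1, by ring⟩
      ⟨S^2+P^2+P-Q^2-Q-R^2, by ring⟩
  -- (1,1,0,1)
  · omega
  -- (1,1,1,0)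
  · omega
  -- (1,1,1,1)
  · have h8 : (8:ℤ) = 4 * 2 := by norm_num
    rw [h8]
    exact mul_dvd_mul ⟨P^2+P+Q^2+Q-R^2-R-S^2-S-t, by ring⟩
      ⟨2*(S^2+S+P^2+P-Q^2-Q-R^2-R), by ring⟩

theorem FP_mod_eight
    (a0 a1 a2 a3 a4 a5 a6 a7 a8 a9 a10 a11 a12 a13 a14 a15 : ℤ)
    (b0 b1 b2 b3 d0 d1 d2 d3 d4 d5 d6 d7 : ℤ)
    (hb0 : b0 = (a0 + a8) + (a4 + a12)) (hb1 : b1 = (a1 + a9) + (a5 + a13))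
    (hb2 : b2 = (a2 + a10) + (a6 + a14)) (hb3 : b3 = (a3 + a11) + (a7 + a15))
    (hd0 : d0 = a0 - a8) (hd1 : d1 = a1 - a9) (hd2 : d2 = a2 - a10) (hd3 : d3 = a3 - a11)
    (hd4 : d4 = a4 - a12) (hd5 : d5 = a5 - a13) (hd6 : d6 = a6 - a14) (hd7 : d7 = a7 - a15)
    (h : b0 + b2 ≡ b1 + b3 [ZMOD 2]) :
    FP d0 d1 d2 d3 d4 d5 d6 d7 ≡ 0 [ZMOD 8] := by
  have hpar : ((d0 + d2) + (d1 + d3) + (d4 + d6) + (d5 + d7)) % 2 = 0 := by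
    unfold Int.ModEq at h
    omega
  have hdvd := key (d0 + d2) (d1 + d3) (d4 + d6) (d5 + d7)
    (d0*d2 + d1*d3 - d4*d6 - d5*d7) hpar
  have heq : FP d0 d1 d2 d3 d4 d5 d6 d7 =
      ((d0+d2)^2 + (d1+d3)^2 - (d4+d6)^2 - (d5+d7)^2 - 4*(d0*d2 + d1*d3 - d4*d6 - d5*d7)) *
      ((d5+d7)^2 + (d0+d2)^2 - (d1+d3)^2 - (d4+d6)^2) := by
    unfold FP fP
    ring
  rw [Int.ModEq]
  rw [heq]
  omega
end

section
/- Let d₀, …, d₇ be integers with d₀ + d₂ + d₄ + d₆ ≡ 0 (mod 2) and d₁ + d₃ + d₅ + d₇ ≡ 0 (mod 2). Then F(d₀, d₁, …, d₇) ≡ 0 (mod 16). -/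
theorem FP_mod_sixteen_of_even_even (d0 d1 d2 d3 d4 d5 d6 d7 : ℤ)
    (h02 : d0 + d2 + d4 + d6 ≡ 0 [ZMOD 2]) (h13 : d1 + d3 + d5 + d7 ≡ 0 [ZMOD 2]) :
    FP d0 d1 d2 d3 d4 d5 d6 d7 ≡ 0 [ZMOD 16] := by
  obtain ⟨a, ha⟩ := (Int.modEq_zero_iff_dvd).mp h02
  obtain ⟨b, hb⟩ := (Int.modEq_zero_iff_dvd).mp h13
  rw [Int.modEq_zero_iff_dvd]
  have h6 : d6 = 2 * a - d0 - d2 - d4 := by linarith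
  have h7 : d7 = 2 * b - d1 - d3 - d5 := by linarith
  subst h6 h7
  -- factor 1: x≡z mod 2, y≡w mod 2
  have f1 : (4:ℤ) ∣ fP (d0 - d2) (d1 - d3) (d4 - (2 * a - d0 - d2 - d4)) (d5 - (2 * b - d1 - d3 - d5)) := by
    refine ⟨(d0-d2)*(a-d2-d4) - (a-d2-d4)^2 + (d1-d3)*(b-d3-d5) - (b-d3-d5)^2, ?_⟩
    simp only [fP]; ring
  have f2 : (4:ℤ) ∣ fP (d5 + (2 * b - d1 - d3 - d5)) (d0 + d2) (d1 + d3) (d4 + (2 * a - d0 - d2 - d4)) := by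
    refine ⟨b*(b-d1-d3) + a*(d0+d2-a), ?_⟩
    simp only [fP]; ring
  obtain ⟨u, hu⟩ := f1; obtain ⟨v, hv⟩ := f2
  exact ⟨u*v, by rw [FP, hu, hv]; ring⟩
end
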